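/- arXiv:1202.4703 — 4 statements merged into one kernel-verified Lean document; each statement's English description precedes it below -/
import Mathlib

section
/- Let C ⊆ L0+ be convexly compact (convex, closed in the topology of convergence in probability, and bounded), and let (f_n)_{n∈ℕ} be a C-valued sequence converging in probability to some g ∈ C^max. Then every sequence of forward convex combinations of (f_n)_{n∈ℕ} also converges in probability to g. -/
open MeasureTheory Filter Set

noncomputable section

variable {Ω : Type*} [MeasurableSpace Ω]

/-- The nonnegative orthant `L⁰₊` of the space `L⁰` of (a.e.-equivalence classes of)
random variables over `(Ω, ℱ, P)`. -/
def L0plus (P : Measure Ω) : Set (Ω →ₘ[P] ℝ) := {f | 0 ≤ f}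

/-- The metric `(f, g) ↦ E[1 ∧ |f - g|]` inducing the topology of convergence
in probability on `L⁰`. -/
def dist0 (P : Measure Ω) (f g : Ω →ₘ[P] ℝ) : ℝ :=
  ∫ ω, min 1 |f ω - g ω| ∂P

/-- Convergence in probability of a sequence in `L⁰`. -/
def Tendsto0 (P : Measure Ω) (f : ℕ → Ω →ₘ[P] ℝ) (g : Ω →ₘ[P] ℝ) : Prop :=
  Tendsto (fun n => dist0 P (f n) g) atTop (nhds 0)

/-- Closure of a set in `L⁰` with respect to the topology of convergence in probability. -/
def closure0 (P : Measure Ω) (C : Set (Ω →ₘ[P] ℝ)) : Set (Ω →ₘ[P] ℝ) :=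
  {f | ∀ ε : ℝ, 0 < ε → ∃ g ∈ C, dist0 P f g < ε}

/-- A set of `L⁰` is closed iff it contains its closure. -/
def IsClosed0 (P : Measure Ω) (C : Set (Ω →ₘ[P] ℝ)) : Prop :=
  closure0 P C ⊆ C

/-- Boundedness (in probability) of a set `C ⊆ L⁰₊` : `lim_{ℓ → ∞} sup_{f ∈ C} P[f > ℓ] = 0`. -/
def Bounded0 (P : Measure Ω) (C : Set (Ω →ₘ[P] ℝ)) : Prop :=
  Tendsto (fun ℓ : ℝ => ⨆ f ∈ C, P {ω | ℓ < f ω}) atTop (nhds 0)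

/-- The set `C^max` of maximal elements of `C ⊆ L⁰₊` : `f ∈ C` such that `f ≤ g` a.s.
and `g ∈ C` imply `f = g` a.s. -/
def maxSet (P : Measure Ω) (C : Set (Ω →ₘ[P] ℝ)) : Set (Ω →ₘ[P] ℝ) :=
  {f | f ∈ C ∧ ∀ g ∈ C, f ≤ g → f = g}

/-- `C` is max-closed if every maximal element of its closure already belongs to `C`. -/
def MaxClosed (P : Measure Ω) (C : Set (Ω →ₘ[P] ℝ)) : Prop :=
  maxSet P (closure0 P C) ⊆ C

/-- The pairing `⟨μ, f⟩ = ∫ f dμ ∈ [0, ∞]` between a nonnegative measure `μ` and `f ∈ L⁰₊`. -/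
def pairing {P : Measure Ω} (μ : Measure Ω) (f : Ω →ₘ[P] ℝ) : ENNReal :=
  ∫⁻ ω, ENNReal.ofReal (f ω) ∂μ

/-- The set `C^osp` of outer support points of `C ⊆ L⁰₊`: points `g ∈ C^max` for which there
is a σ-finite nonnegative measure `μ ≪ P` with `0 < sup_{f ∈ C} ⟨μ, f⟩ = ⟨μ, g⟩ < ∞`;
by convention `{0}^osp = {0}`. -/
def osp (P : Measure Ω) (C : Set (Ω →ₘ[P] ℝ)) : Set (Ω →ₘ[P] ℝ) :=
  {g | g ∈ maxSet P C ∧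
    (C = {0} ∨ ∃ μ : Measure Ω, μ ≪ P ∧ SigmaFinite μ ∧
      0 < pairing μ g ∧ pairing μ g < ⊤ ∧ (⨆ f ∈ C, pairing μ f) = pairing μ g)}

/-- The solid hull of `C ⊆ L⁰₊`. -/
def solidHull (P : Measure Ω) (C : Set (Ω →ₘ[P] ℝ)) : Set (Ω →ₘ[P] ℝ) :=
  {f | f ∈ L0plus P ∧ ∃ g ∈ C, f ≤ g}

/-- A set `S ⊆ L⁰₊` is solid if `g ∈ S` and `0 ≤ f ≤ g` imply `f ∈ S`. -/
def Solid (P : Measure Ω) (S : Set (Ω →ₘ[P] ℝ)) : Prop :=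
  ∀ g ∈ S, ∀ f : Ω →ₘ[P] ℝ, 0 ≤ f → f ≤ g → f ∈ S

/-- `(g n)` is a sequence of forward convex combinations of `(f n)`. -/
def ForwardConvexComb (P : Measure Ω) (f g : ℕ → Ω →ₘ[P] ℝ) : Prop :=
  ∀ n : ℕ, g n ∈ convexHull ℝ (f '' Set.Ici n)

end

/-!
With `truncMean P v = E[1 ∧ v]` we have `dist0 P f g = truncMean P |f - g|`. The shortfalls
`(g - h n)⁺` are dominated by forward convex combinations of `(g - f m)⁺ ≤ g`. Domination by the
fixed `g` lets `truncMean` pass through forward convex combinations up to the small tail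
`truncMean (g / M)`, so `truncMean (g - h n)⁺ → 0`. If `h n` did not converge to `g`, a
subsequence would keep its excess `truncMean (h (φ k) - g)⁺ ≥ c > 0`.

Since `C` is bounded, a Komlós-type argument yields forward convex combinations `y j` of that
subsequence which are Cauchy in probability: choose `y j` nearly maximizing the strictly concave
`E[1 - exp (-v)]` over the convex hull of the `j`-th tail; the concavity defect at the midpoint
of `y m` and `y n` is then small, and it controls `dist0 (y m) (y n)` wherever both are bounded.
By completeness `y j → H ∈ C`; the shortfall of `y j` below `g` still vanishes, so `g ≤ H`, and
maximality forces `H = g`. But by concavity of `1 ∧ ·` the averaged excesses of the `y j` keep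
`truncMean ≥ c`, contradicting `y j → g`.
-/

open scoped Topology

section RealInequalities

lemma min_one_add_le {x y : ℝ} (hx : 0 ≤ x) (hy : 0 ≤ y) :
    min 1 (x + y) ≤ min 1 x + min 1 y := by
  simp only [min_def]; split_ifs <;> linarith

lemma le_mul_min_one {x M : ℝ} (hx : 0 ≤ x) (hxM : x ≤ M) (hM : 1 ≤ M) : x ≤ M * min 1 x := by
  simp only [min_def]; split_ifs <;> nlinarith

lemma concaveOn_min_one : ConcaveOn ℝ univ (fun x : ℝ => min 1 x) :=
  (concaveOn_const 1 convex_univ).inf (concaveOn_id convex_univ)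

lemma convexOn_posPart_const_sub (c : ℝ) : ConvexOn ℝ univ (fun x : ℝ => (c - x)⁺) :=
  ((convexOn_const c convex_univ).sub (concaveOn_id convex_univ)).sup
    (convexOn_const 0 convex_univ)

end RealInequalities

/-- The coefficients of a sequence of forward convex combinations. -/
structure ForwardWeights where
  supp : ℕ → Finset ℕ
  weight : ℕ → ℕ → ℝ
  weight_nonneg : ∀ n, ∀ m ∈ supp n, 0 ≤ weight n m
  sum_weight : ∀ n, ∑ m ∈ supp n, weight n m = 1
  le_of_mem_supp : ∀ n, ∀ m ∈ supp n, n ≤ m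

namespace ForwardWeights

variable (W : ForwardWeights)

def avg (a : ℕ → ℝ) (n : ℕ) : ℝ := ∑ m ∈ W.supp n, W.weight n m * a m

lemma supp_nonempty (n : ℕ) : (W.supp n).Nonempty :=
  Finset.nonempty_of_sum_ne_zero (by rw [W.sum_weight]; exact one_ne_zero)

lemma avg_const (c : ℝ) (n : ℕ) : W.avg (fun _ => c) n = c := by
  rw [avg, ← Finset.sum_mul, W.sum_weight, one_mul]

lemma avg_sub (a b : ℕ → ℝ) (n : ℕ) : W.avg (fun m => a m - b m) n = W.avg a n - W.avg b n := by
  simp only [avg, mul_sub, Finset.sum_sub_distrib]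

lemma avg_const_mul (c : ℝ) (a : ℕ → ℝ) (n : ℕ) : W.avg (fun m => c * a m) n = c * W.avg a n := by
  simp only [avg, Finset.mul_sum, mul_left_comm]

lemma avg_le_avg {a b : ℕ → ℝ} {n : ℕ} (h : ∀ m ∈ W.supp n, a m ≤ b m) :
    W.avg a n ≤ W.avg b n :=
  Finset.sum_le_sum fun m hm => mul_le_mul_of_nonneg_left (h m hm) (W.weight_nonneg n m hm)

lemma avg_nonneg {a : ℕ → ℝ} {n : ℕ} (h : ∀ m ∈ W.supp n, 0 ≤ a m) : 0 ≤ W.avg a n := by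
  simpa only [avg_const] using W.avg_le_avg h

lemma avg_min_one_le (a : ℕ → ℝ) (n : ℕ) :
    W.avg (fun m => min 1 (a m)) n ≤ min 1 (W.avg a n) :=
  concaveOn_min_one.le_map_sum (W.weight_nonneg n) (W.sum_weight n) fun m _ => mem_univ (a m)

lemma posPart_const_sub_avg_le (c : ℝ) (a : ℕ → ℝ) (n : ℕ) :
    (c - W.avg a n)⁺ ≤ W.avg (fun m => (c - a m)⁺) n :=
  (convexOn_posPart_const_sub c).map_sum_le (W.weight_nonneg n) (W.sum_weight n)
    fun m _ => mem_univ (a m)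

lemma min_one_avg_le {a : ℕ → ℝ} {d M : ℝ} {n : ℕ} (ha : ∀ m ∈ W.supp n, 0 ≤ a m ∧ a m ≤ d)
    (hM : 1 ≤ M) : min 1 (W.avg a n) ≤ min 1 (d / M) + M * W.avg (fun m => min 1 (a m)) n := by
  obtain ⟨m₀, hm₀⟩ := W.supp_nonempty n
  have hd : 0 ≤ d / M := div_nonneg ((ha m₀ hm₀).1.trans (ha m₀ hm₀).2) (by linarith)
  have hmin : 0 ≤ M * W.avg (fun m => min 1 (a m)) n :=
    mul_nonneg (by linarith) (W.avg_nonneg fun m hm => le_min zero_le_one (ha m hm).1)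
  rcases le_or_gt d M with hdM | hdM
  · calc min 1 (W.avg a n) ≤ W.avg a n := min_le_right _ _
      _ ≤ W.avg (fun m => M * min 1 (a m)) n :=
          W.avg_le_avg fun m hm => le_mul_min_one (ha m hm).1 ((ha m hm).2.trans hdM) hM
      _ ≤ min 1 (d / M) + M * W.avg (fun m => min 1 (a m)) n := by
          rw [W.avg_const_mul]
          linarith [le_min zero_le_one hd]
  · have hone : min 1 (d / M) = 1 := min_eq_left ((one_le_div₀ (by linarith)).2 hdM.le)
    linarith [min_le_left 1 (W.avg a n)]

lemma eventually_forall_mem_supp {p : ℕ → Prop} (h : ∀ᶠ m in atTop, p m) :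
    ∀ᶠ n in atTop, ∀ m ∈ W.supp n, p m := by
  obtain ⟨N, hN⟩ := eventually_atTop.1 h
  filter_upwards [eventually_ge_atTop N] with n hn m hm
  exact hN m (hn.trans (W.le_of_mem_supp n m hm))

lemma tendsto_avg {a : ℕ → ℝ} {L : ℝ} (ha : Tendsto a atTop (𝓝 L)) :
    Tendsto (W.avg a) atTop (𝓝 L) := by
  refine tendsto_order.2 ⟨fun l hl => ?_, fun u hu => ?_⟩
  · obtain ⟨l', hll', hl'⟩ := exists_between hl
    filter_upwards [W.eventually_forall_mem_supp (ha.eventually (lt_mem_nhds hl'))] with n hn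
    exact hll'.trans_le (by simpa only [avg_const] using W.avg_le_avg fun m hm => (hn m hm).le)
  · obtain ⟨u', hu', hu'u⟩ := exists_between hu
    filter_upwards [W.eventually_forall_mem_supp (ha.eventually (gt_mem_nhds hu'))] with n hn
    refine lt_of_le_of_lt ?_ hu'u
    simpa only [avg_const] using W.avg_le_avg fun m hm => (hn m hm).le

end ForwardWeights

section TruncMean

variable {Ω : Type*} [MeasurableSpace Ω]

noncomputable def truncMean (P : Measure Ω) (v : Ω → ℝ) : ℝ := ∫ ω, min 1 (v ω) ∂P

variable {P : Measure Ω}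

lemma integrable_min_one [IsFiniteMeasure P] {v : Ω → ℝ} (hv : AEStronglyMeasurable v P)
    (h0 : 0 ≤ᵐ[P] v) : Integrable (fun ω => min 1 (v ω)) P := by
  refine (integrable_const (1 : ℝ)).mono' (by fun_prop) ?_
  filter_upwards [h0] with ω hω
  rw [Real.norm_eq_abs, abs_of_nonneg (le_min zero_le_one hω)]
  exact min_le_left _ _

lemma truncMean_nonneg {v : Ω → ℝ} (h0 : 0 ≤ᵐ[P] v) : 0 ≤ truncMean P v :=
  integral_nonneg_of_ae <| by filter_upwards [h0] with ω hω using le_min zero_le_one hω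

lemma truncMean_mono [IsFiniteMeasure P] {u v : Ω → ℝ} (hv : AEStronglyMeasurable v P)
    (hu0 : 0 ≤ᵐ[P] u) (huv : u ≤ᵐ[P] v) : truncMean P u ≤ truncMean P v := by
  refine integral_mono_of_nonneg ?_ (integrable_min_one hv (hu0.trans huv)) ?_
  · filter_upwards [hu0] with ω hω using le_min zero_le_one hω
  · filter_upwards [huv] with ω hω using min_le_min_left 1 hω

lemma truncMean_le_add [IsFiniteMeasure P] {u v w : Ω → ℝ} (hv : AEStronglyMeasurable v P)
    (hw : AEStronglyMeasurable w P) (hu0 : 0 ≤ᵐ[P] u) (hv0 : 0 ≤ᵐ[P] v) (hw0 : 0 ≤ᵐ[P] w)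
    (h : u ≤ᵐ[P] fun ω => v ω + w ω) : truncMean P u ≤ truncMean P v + truncMean P w := by
  have hvw : ∀ᵐ ω ∂P, min 1 (u ω) ≤ min 1 (v ω) + min 1 (w ω) := by
    filter_upwards [h, hv0, hw0] with ω hω hvω hwω
    exact (min_le_min_left 1 hω).trans (min_one_add_le hvω hwω)
  rw [truncMean, truncMean, truncMean,
    ← integral_add (integrable_min_one hv hv0) (integrable_min_one hw hw0)]
  refine integral_mono_of_nonneg ?_
    ((integrable_min_one hv hv0).add (integrable_min_one hw hw0)) hvw
  filter_upwards [hu0] with ω hω using le_min zero_le_one hω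

lemma ae_eq_zero_of_truncMean_eq_zero [IsFiniteMeasure P] {v : Ω → ℝ}
    (hv : AEStronglyMeasurable v P) (h0 : 0 ≤ᵐ[P] v) (h : truncMean P v = 0) : v =ᵐ[P] 0 := by
  have hmin : (fun ω => min 1 (v ω)) =ᵐ[P] 0 := by
    refine (integral_eq_zero_iff_of_nonneg_ae ?_ (integrable_min_one hv h0)).1 h
    filter_upwards [h0] with ω hω using le_min zero_le_one hω
  filter_upwards [hmin] with ω hω
  exact (by simpa [min_eq_iff] using hω : v ω = 0 ∧ v ω ≤ 1).1

lemma tendsto_truncMean_div_atTop [IsFiniteMeasure P] {D : Ω → ℝ}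
    (hD : AEStronglyMeasurable D P) (hD0 : 0 ≤ᵐ[P] D) :
    Tendsto (fun M : ℝ => truncMean P (fun ω => D ω / M)) atTop (𝓝 0) := by
  have hlim : ∀ᵐ ω ∂P, Tendsto (fun M : ℝ => min 1 (D ω / M)) atTop (𝓝 0) := by
    refine ae_of_all _ fun ω => ?_
    simpa using (tendsto_const_nhds (x := (1 : ℝ))).min
      ((tendsto_const_nhds (x := D ω)).div_atTop tendsto_id)
  have hbound : ∀ᶠ M : ℝ in atTop, ∀ᵐ ω ∂P, ‖min 1 (D ω / M)‖ ≤ 1 := by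
    filter_upwards [eventually_ge_atTop 0] with M hM
    filter_upwards [hD0] with ω hω
    rw [Real.norm_eq_abs, abs_of_nonneg (le_min zero_le_one (div_nonneg hω hM))]
    exact min_le_left _ _
  simpa [truncMean] using tendsto_integral_filter_of_dominated_convergence (fun _ => (1 : ℝ))
    (Eventually.of_forall fun M => by fun_prop) hbound (integrable_const 1) hlim

lemma ForwardWeights.aestronglyMeasurable_avg (W : ForwardWeights) {e : ℕ → Ω → ℝ}
    (he : ∀ m, AEStronglyMeasurable (e m) P) (n : ℕ) :
    AEStronglyMeasurable (fun ω => W.avg (e · ω) n) P :=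
  Finset.aestronglyMeasurable_fun_sum _ fun m _ => (he m).const_mul _

lemma ForwardWeights.integral_avg (W : ForwardWeights) {e : ℕ → Ω → ℝ}
    (he : ∀ m, Integrable (e m) P) (n : ℕ) :
    ∫ ω, W.avg (e · ω) n ∂P = W.avg (fun m => ∫ ω, e m ω ∂P) n := by
  simp only [ForwardWeights.avg]
  rw [integral_finsetSum _ fun m _ => (he m).const_mul _]
  simp only [integral_const_mul]

lemma ForwardWeights.truncMean_avg_le [IsFiniteMeasure P] (W : ForwardWeights) {D : Ω → ℝ}
    (hD : AEStronglyMeasurable D P) {e : ℕ → Ω → ℝ} (he : ∀ m, AEStronglyMeasurable (e m) P)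
    (he0 : ∀ m, 0 ≤ᵐ[P] e m) (heD : ∀ m, e m ≤ᵐ[P] D) {M : ℝ} (hM : 1 ≤ M) (n : ℕ) :
    truncMean P (fun ω => W.avg (e · ω) n) ≤
      truncMean P (fun ω => D ω / M) + M * W.avg (fun m => truncMean P (e m)) n := by
  have hD0 : 0 ≤ᵐ[P] D := (he0 0).trans (heD 0)
  have hDM : Integrable (fun ω => min 1 (D ω / M)) P :=
    integrable_min_one (by fun_prop)
      (by filter_upwards [hD0] with ω hω using div_nonneg hω (by linarith))
  have hint : Integrable (fun ω => M * W.avg (fun m => min 1 (e m ω)) n) P :=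
    (integrable_finsetSum _ fun m _ => (integrable_min_one (he m) (he0 m)).const_mul _).const_mul M
  have hpt : ∀ᵐ ω ∂P, ∀ m, 0 ≤ e m ω ∧ e m ω ≤ D ω := ae_all_iff.2 fun m => (he0 m).and (heD m)
  calc truncMean P (fun ω => W.avg (e · ω) n)
      ≤ ∫ ω, (min 1 (D ω / M) + M * W.avg (fun m => min 1 (e m ω)) n) ∂P := by
        refine integral_mono_of_nonneg ?_ (hDM.add hint) ?_
        · filter_upwards [hpt] with ω hω
          exact le_min zero_le_one (W.avg_nonneg fun m _ => (hω m).1)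
        · filter_upwards [hpt] with ω hω using W.min_one_avg_le (fun m _ => hω m) hM
    _ = _ := by
        rw [integral_add hDM hint, integral_const_mul,
          W.integral_avg fun m => integrable_min_one (he m) (he0 m)]
        rfl

lemma ForwardWeights.avg_truncMean_le [IsFiniteMeasure P] (W : ForwardWeights) {a : ℕ → Ω → ℝ}
    (ha : ∀ m, AEStronglyMeasurable (a m) P) (ha0 : ∀ m, 0 ≤ᵐ[P] a m) (n : ℕ) :
    W.avg (fun m => truncMean P (a m)) n ≤ truncMean P (fun ω => W.avg (a · ω) n) := by
  have hpt : ∀ᵐ ω ∂P, ∀ m, 0 ≤ a m ω := ae_all_iff.2 ha0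
  rw [truncMean, show W.avg (fun m => truncMean P (a m)) n = _ from
    (W.integral_avg fun m => integrable_min_one (ha m) (ha0 m)) n |>.symm]
  refine integral_mono_of_nonneg ?_ (integrable_min_one (W.aestronglyMeasurable_avg ha n) ?_) ?_
  · filter_upwards [hpt] with ω hω using W.avg_nonneg fun m _ => le_min zero_le_one (hω m)
  · filter_upwards [hpt] with ω hω using W.avg_nonneg fun m _ => hω m
  · exact ae_of_all _ fun ω => W.avg_min_one_le _ n

theorem ForwardWeights.tendsto_truncMean_avg [IsFiniteMeasure P] (W : ForwardWeights)
    {D : Ω → ℝ} (hD : AEStronglyMeasurable D P) {e : ℕ → Ω → ℝ}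
    (he : ∀ m, AEStronglyMeasurable (e m) P) (he0 : ∀ m, 0 ≤ᵐ[P] e m) (heD : ∀ m, e m ≤ᵐ[P] D)
    (hlim : Tendsto (fun m => truncMean P (e m)) atTop (𝓝 0)) :
    Tendsto (fun n => truncMean P (fun ω => W.avg (e · ω) n)) atTop (𝓝 0) := by
  have hD0 : 0 ≤ᵐ[P] D := (he0 0).trans (heD 0)
  refine tendsto_order.2 ⟨fun l hl => Eventually.of_forall fun n => hl.trans_le ?_,
    fun u hu => ?_⟩
  · exact truncMean_nonneg (by
      filter_upwards [ae_all_iff.2 he0] with ω hω using W.avg_nonneg fun m _ => hω m)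
  obtain ⟨M, hMu, hM⟩ := ((tendsto_truncMean_div_atTop hD hD0).eventually
    (gt_mem_nhds (half_pos hu))).and (eventually_ge_atTop 1) |>.exists
  have hsmall : ∀ᶠ n in atTop, M * W.avg (fun m => truncMean P (e m)) n < u / 2 := by
    have := (W.tendsto_avg hlim).const_mul M
    rw [mul_zero] at this
    exact this.eventually (gt_mem_nhds (half_pos hu))
  filter_upwards [hsmall] with n hn
  linarith [W.truncMean_avg_le hD he he0 heD hM n]

end TruncMean

lemma exists_weights_of_mem_convexHull_image_Ici {E : Type*} [AddCommGroup E] [Module ℝ E]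
    {x : ℕ → E} {n : ℕ} {z : E} (hz : z ∈ convexHull ℝ (x '' Ici n)) :
    ∃ (t : Finset ℕ) (w : ℕ → ℝ), (∀ m ∈ t, 0 ≤ w m) ∧ ∑ m ∈ t, w m = 1 ∧
      (∀ m ∈ t, n ≤ m) ∧ z = ∑ m ∈ t, w m • x m := by
  have hrange : x '' Ici n = range fun k => x (n + k) := by
    ext y
    simp only [mem_image, mem_Ici, mem_range]
    exact ⟨fun ⟨m, hm, hy⟩ => ⟨m - n, by rwa [Nat.add_sub_cancel' hm]⟩,
      fun ⟨k, hk⟩ => ⟨n + k, Nat.le_add_right n k, hk⟩⟩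
  rw [hrange, convexHull_range_eq_exists_affineCombination] at hz
  obtain ⟨s, w, hw0, hw1, rfl⟩ := hz
  refine ⟨s.map (addLeftEmbedding n), fun m => w (m - n), ?_, ?_, ?_, ?_⟩
  · simpa using hw0
  · simpa using hw1
  · simp
  · rw [Finset.affineCombination_eq_linear_combination _ _ _ hw1]; simp

section L0

variable {Ω : Type*} [MeasurableSpace Ω] {P : Measure Ω}

lemma ae_nonneg_of_mem_L0plus {f : Ω →ₘ[P] ℝ} (hf : f ∈ L0plus P) : 0 ≤ᵐ[P] f := by
  filter_upwards [AEEqFun.coeFn_le.2 hf, AEEqFun.coeFn_zero (μ := P) (β := ℝ)] with ω h h0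
  rwa [h0] at h

lemma posPart_sub_ae_le {g x : Ω →ₘ[P] ℝ} (hg : g ∈ L0plus P) (hx : x ∈ L0plus P) :
    (fun ω => (g ω - x ω)⁺) ≤ᵐ[P] g := by
  filter_upwards [ae_nonneg_of_mem_L0plus hg, ae_nonneg_of_mem_L0plus hx] with ω hgω hxω
  exact max_le (sub_le_self _ hxω) hgω

lemma ForwardConvexComb.mem_of_convex {C : Set (Ω →ₘ[P] ℝ)} (hC : Convex ℝ C)
    {x z : ℕ → Ω →ₘ[P] ℝ} (hx : ∀ m, x m ∈ C) (h : ForwardConvexComb P x z) (n : ℕ) : z n ∈ C :=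
  convexHull_min (image_subset_iff.2 fun m _ => hx m) hC (h n)

lemma ForwardConvexComb.exists_forwardWeights {x z : ℕ → Ω →ₘ[P] ℝ}
    (h : ForwardConvexComb P x z) :
    ∃ W : ForwardWeights, ∀ n, z n =ᵐ[P] fun ω => W.avg (x · ω) n := by
  choose t w hw0 hw1 ht hz using fun n => exists_weights_of_mem_convexHull_image_Ici (h n)
  refine ⟨⟨t, w, hw0, hw1, ht⟩, fun n => ?_⟩
  rw [hz n]
  filter_upwards [AEEqFun.coeFn_fun_finsetSum (t n) fun m => w n m • x m,
    ae_all_iff.2 fun m => AEEqFun.coeFn_smul (w n m) (x m)] with ω hsum hsmul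
  simp [hsum, hsmul, ForwardWeights.avg]

lemma dist0_comm (f g : Ω →ₘ[P] ℝ) : dist0 P f g = dist0 P g f := by
  simp only [dist0, abs_sub_comm]

lemma mem_closure0_of_tendsto0 {C : Set (Ω →ₘ[P] ℝ)} {y : ℕ → Ω →ₘ[P] ℝ} {H : Ω →ₘ[P] ℝ}
    (hy : ∀ n, y n ∈ C) (hyH : Tendsto0 P y H) : H ∈ closure0 P C := fun ε hε =>
  have ⟨n, hn⟩ := (hyH.eventually (gt_mem_nhds hε)).exists
  ⟨y n, hy n, by rwa [dist0_comm]⟩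

lemma dist0_nonneg (f g : Ω →ₘ[P] ℝ) : 0 ≤ dist0 P f g :=
  truncMean_nonneg (P := P) (v := fun ω => |f ω - g ω|) (ae_of_all _ fun _ => abs_nonneg _)

variable [IsFiniteMeasure P]

lemma dist0_triangle (f g h : Ω →ₘ[P] ℝ) : dist0 P f h ≤ dist0 P f g + dist0 P g h :=
  truncMean_le_add (by fun_prop) (by fun_prop) (ae_of_all _ fun _ => abs_nonneg _)
    (ae_of_all _ fun _ => abs_nonneg _) (ae_of_all _ fun _ => abs_nonneg _)
    (ae_of_all _ fun _ => abs_sub_le _ _ _)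

lemma Tendsto0.tendsto_truncMean_posPart_sub {f : ℕ → Ω →ₘ[P] ℝ} {g : Ω →ₘ[P] ℝ}
    (h : Tendsto0 P f g) : Tendsto (fun n => truncMean P fun ω => (g ω - f n ω)⁺) atTop (𝓝 0) :=
  squeeze_zero (fun n => truncMean_nonneg (ae_of_all _ fun _ => posPart_nonneg _))
    (fun n => truncMean_mono (by fun_prop) (ae_of_all _ fun _ => posPart_nonneg _) <|
      ae_of_all _ fun ω => by
        simp only [abs_sub_comm (f n ω)]; exact max_le (le_abs_self _) (abs_nonneg _)) h

lemma dist0_le_truncMean_posPart_add (f g : Ω →ₘ[P] ℝ) :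
    dist0 P f g ≤
      truncMean P (fun ω => (f ω - g ω)⁺) + truncMean P (fun ω => (g ω - f ω)⁺) :=
  truncMean_le_add (by fun_prop) (by fun_prop) (ae_of_all _ fun _ => abs_nonneg _)
    (ae_of_all _ fun _ => posPart_nonneg _) (ae_of_all _ fun _ => posPart_nonneg _) <|
    ae_of_all _ fun ω => by
      simp only [← neg_sub (f ω), posPart_neg, posPart_add_negPart, le_refl]

end L0

section Shortfall

variable {Ω : Type*} [MeasurableSpace Ω] {P : Measure Ω} [IsFiniteMeasure P]

theorem tendsto_truncMean_posPart_sub_of_forwardConvexComb {g : Ω →ₘ[P] ℝ}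
    (hg : g ∈ L0plus P) {x z : ℕ → Ω →ₘ[P] ℝ} (hx : ∀ m, x m ∈ L0plus P)
    (hxz : ForwardConvexComb P x z)
    (hlim : Tendsto (fun m => truncMean P fun ω => (g ω - x m ω)⁺) atTop (𝓝 0)) :
    Tendsto (fun n => truncMean P fun ω => (g ω - z n ω)⁺) atTop (𝓝 0) := by
  obtain ⟨W, hW⟩ := hxz.exists_forwardWeights
  have hle m := posPart_sub_ae_le hg (hx m)
  refine squeeze_zero (fun n => truncMean_nonneg (ae_of_all _ fun _ => posPart_nonneg _))
    (fun n => ?_) (W.tendsto_truncMean_avg g.aestronglyMeasurable (fun m => by fun_prop)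
      (fun m => ae_of_all _ fun _ => posPart_nonneg _) hle hlim)
  refine truncMean_mono (W.aestronglyMeasurable_avg (fun m => by fun_prop) n)
    (ae_of_all _ fun _ => posPart_nonneg _) ?_
  filter_upwards [hW n] with ω hω
  rw [hω]
  exact W.posPart_const_sub_avg_le _ _ n

theorem exists_truncMean_posPart_sub_lt {g : Ω →ₘ[P] ℝ} (hg : g ∈ L0plus P)
    {x z : ℕ → Ω →ₘ[P] ℝ} (hx : ∀ m, x m ∈ L0plus P) (hxz : ForwardConvexComb P x z)
    (hlim : Tendsto (fun m => truncMean P fun ω => (g ω - x m ω)⁺) atTop (𝓝 0))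
    (hzg : Tendsto0 P z g) {c : ℝ} (hc : 0 < c) :
    ∃ m, truncMean P (fun ω => (x m ω - g ω)⁺) < c := by
  by_contra! hge
  obtain ⟨W, hW⟩ := hxz.exists_forwardWeights
  have hle m := posPart_sub_ae_le hg (hx m)
  have hshortfall := W.tendsto_truncMean_avg g.aestronglyMeasurable (fun m => by fun_prop)
    (fun m => ae_of_all _ fun _ => posPart_nonneg _) hle hlim
  have hbound : ∀ n, c ≤ dist0 P (z n) g +
      truncMean P (fun ω => W.avg (fun m => (g ω - x m ω)⁺) n) := fun n => calc
    c = W.avg (fun _ => c) n := (W.avg_const c n).symm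
    _ ≤ W.avg (fun m => truncMean P fun ω => (x m ω - g ω)⁺) n := W.avg_le_avg fun m _ => hge m
    _ ≤ truncMean P (fun ω => W.avg (fun m => (x m ω - g ω)⁺) n) :=
        W.avg_truncMean_le (fun m => by fun_prop) (fun m => ae_of_all _ fun _ => posPart_nonneg _) n
    _ ≤ _ := by
        refine truncMean_le_add (by fun_prop) (W.aestronglyMeasurable_avg (fun m => by fun_prop) n)
          (ae_of_all _ fun _ => W.avg_nonneg fun m _ => posPart_nonneg _)
          (ae_of_all _ fun _ => abs_nonneg _)
          (ae_of_all _ fun _ => W.avg_nonneg fun m _ => posPart_nonneg _) ?_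
        filter_upwards [hW n] with ω hω
        have hsplit : W.avg (fun m => (x m ω - g ω)⁺) n - W.avg (fun m => (g ω - x m ω)⁺) n =
            z n ω - g ω := by
          rw [← W.avg_sub, hω, ← W.avg_const (g ω) n, ← W.avg_sub]
          simp only [← neg_sub (x _ ω), posPart_neg, posPart_sub_negPart, W.avg_const]
        linarith [le_abs_self (z n ω - g ω)]
  have hlim' := hzg.add hshortfall
  rw [add_zero] at hlim'
  exact hc.not_ge (ge_of_tendsto hlim' (Eventually.of_forall hbound))

lemma exists_strictMono_le_truncMean_posPart_sub {g : Ω →ₘ[P] ℝ} {x : ℕ → Ω →ₘ[P] ℝ}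
    (hx : ¬ Tendsto0 P x g)
    (hlim : Tendsto (fun n => truncMean P fun ω => (g ω - x n ω)⁺) atTop (𝓝 0)) :
    ∃ c > 0, ∃ φ : ℕ → ℕ, StrictMono φ ∧
      ∀ k, c ≤ truncMean P (fun ω => (x (φ k) ω - g ω)⁺) := by
  obtain ⟨ε, hε, hfreq⟩ : ∃ ε > 0, ∃ᶠ n in atTop, ε ≤ dist0 P (x n) g := by
    by_contra! h
    exact hx (tendsto_order.2 ⟨fun l hl => Eventually.of_forall fun n =>
      hl.trans_le (dist0_nonneg _ _), h⟩)
  obtain ⟨φ, hφ, hbad⟩ := extraction_of_frequently_atTop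
    (hfreq.and_eventually (hlim.eventually (gt_mem_nhds (half_pos hε))))
  refine ⟨ε / 2, half_pos hε, φ, hφ, fun k => ?_⟩
  linarith [(hbad k).1, (hbad k).2, dist0_le_truncMean_posPart_add (x (φ k)) g]

lemma le_of_tendsto0_of_tendsto_truncMean_posPart_sub {g H : Ω →ₘ[P] ℝ}
    {y : ℕ → Ω →ₘ[P] ℝ} (hyH : Tendsto0 P y H)
    (hgy : Tendsto (fun n => truncMean P fun ω => (g ω - y n ω)⁺) atTop (𝓝 0)) : g ≤ H := by
  have hbound : ∀ n, truncMean P (fun ω => (g ω - H ω)⁺) ≤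
      truncMean P (fun ω => (g ω - y n ω)⁺) + dist0 P (y n) H := fun n =>
    truncMean_le_add (by fun_prop) (by fun_prop) (ae_of_all _ fun _ => posPart_nonneg _)
      (ae_of_all _ fun _ => posPart_nonneg _) (ae_of_all _ fun _ => abs_nonneg _) <|
      ae_of_all _ fun ω => show _ ≤ _ + _ from max_le
        (by linarith [le_posPart (g ω - y n ω), le_abs_self (y n ω - H ω)]) (by positivity)
  have hlim := hgy.add hyH
  rw [add_zero] at hlim
  have hzero : truncMean P (fun ω => (g ω - H ω)⁺) = 0 :=
    le_antisymm (ge_of_tendsto' hlim hbound)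
      (truncMean_nonneg (ae_of_all _ fun _ => posPart_nonneg _))
  rw [← AEEqFun.coeFn_le]
  filter_upwards [ae_eq_zero_of_truncMean_eq_zero (by fun_prop)
    (ae_of_all _ fun _ => posPart_nonneg _) hzero] with ω hω
  simpa [posPart_eq_zero, sub_nonpos] using hω

end Shortfall

lemma summable_of_summable_min_one {ι : Type*} {d : ι → ℝ} (h : Summable fun i => min 1 (d i)) :
    Summable d := by
  refine h.congr_cofinite ?_
  filter_upwards [h.tendsto_cofinite_zero.eventually (gt_mem_nhds one_pos)] with i hi
  exact min_eq_right ((min_lt_iff.1 hi).resolve_left (lt_irrefl 1)).le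

section Completeness

variable {Ω : Type*} [MeasurableSpace Ω] {P : Measure Ω}

lemma ae_summable_of_summable_integral_norm {E : Type*} [NormedAddCommGroup E] [CompleteSpace E]
    {u : ℕ → Ω → E} (hu : ∀ n, Integrable (u n) P) (hs : Summable fun n => ∫ ω, ‖u n ω‖ ∂P) :
    ∀ᵐ ω ∂P, Summable (u · ω) := by
  have hfin : ∑' n, eLpNorm (u n) 1 P ≠ ⊤ := by
    simp_rw [eLpNorm_one_eq_lintegral_enorm, ← ofReal_integral_norm_eq_lintegral_enorm (hu _)]
    rw [← ENNReal.ofReal_tsum_of_nonneg (fun n => integral_nonneg fun _ => norm_nonneg _) hs]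
    exact ENNReal.ofReal_ne_top
  filter_upwards [summable_norm_of_tsum_eLpNorm_ne_top le_rfl (fun n => (hu n).1) hfin]
    with ω hω using hω.of_norm

def CauchySeq0 (P : Measure Ω) (y : ℕ → Ω →ₘ[P] ℝ) : Prop :=
  ∀ ε > 0, ∃ N, ∀ m ≥ N, ∀ n ≥ N, dist0 P (y m) (y n) < ε

variable [IsFiniteMeasure P]

lemma tendsto0_of_ae_tendsto {y : ℕ → Ω →ₘ[P] ℝ} {H : Ω →ₘ[P] ℝ}
    (h : ∀ᵐ ω ∂P, Tendsto (y · ω) atTop (𝓝 (H ω))) : Tendsto0 P y H := by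
  have hlim : ∀ᵐ ω ∂P, Tendsto (fun n => min 1 |y n ω - H ω|) atTop (𝓝 0) := by
    filter_upwards [h] with ω hω
    simpa using (tendsto_const_nhds (x := (1 : ℝ))).min (hω.sub_const (H ω)).abs
  show Tendsto (fun n => ∫ ω, min 1 |y n ω - H ω| ∂P) atTop (𝓝 0)
  simpa using tendsto_integral_of_dominated_convergence (fun _ => (1 : ℝ)) (fun n => by fun_prop)
    (integrable_const 1) (fun n => ae_of_all _ fun ω => by
      rw [Real.norm_eq_abs, abs_of_nonneg (le_min zero_le_one (abs_nonneg _))]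
      exact min_le_left _ _) hlim

lemma exists_ae_tendsto_of_summable_dist0 {y : ℕ → Ω →ₘ[P] ℝ}
    (hs : Summable fun k => dist0 P (y (k + 1)) (y k)) :
    ∃ H : Ω →ₘ[P] ℝ, ∀ᵐ ω ∂P, Tendsto (y · ω) atTop (𝓝 (H ω)) := by
  have hint : ∀ k, Integrable (fun ω => min 1 |y (k + 1) ω - y k ω|) P := fun k =>
    integrable_min_one (by fun_prop) (ae_of_all _ fun _ => abs_nonneg _)
  have hsum := ae_summable_of_summable_integral_norm hint <| hs.congr fun k =>
    integral_congr_ae <| ae_of_all _ fun ω =>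
      (Real.norm_of_nonneg (le_min zero_le_one (abs_nonneg _))).symm
  have hconv : ∀ᵐ ω ∂P, ∃ L, Tendsto (y · ω) atTop (𝓝 L) := by
    filter_upwards [hsum] with ω hω
    refine cauchySeq_tendsto_of_complete (cauchySeq_of_summable_dist ?_)
    simpa [Real.dist_eq, abs_sub_comm] using summable_of_summable_min_one hω
  have hG : ∀ᵐ ω ∂P, Tendsto (y · ω) atTop (𝓝 (limUnder atTop (y · ω))) := by
    filter_upwards [hconv] with ω ⟨L, hL⟩ using hL.limUnder_eq ▸ hL
  have hGm := aemeasurable_of_tendsto_metrizable_ae' (fun k => (y k).aemeasurable) hG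
  refine ⟨AEEqFun.mk _ hGm.aestronglyMeasurable, ?_⟩
  filter_upwards [hG, AEEqFun.coeFn_mk _ hGm.aestronglyMeasurable] with ω hω hmk
  rwa [hmk]

lemma CauchySeq0.tendsto0_of_subseq {y : ℕ → Ω →ₘ[P] ℝ} (hy : CauchySeq0 P y) {φ : ℕ → ℕ}
    (hφ : StrictMono φ) {H : Ω →ₘ[P] ℝ} (hH : Tendsto0 P (y ∘ φ) H) : Tendsto0 P y H := by
  refine tendsto_order.2 ⟨fun l hl => Eventually.of_forall fun n =>
    hl.trans_le (dist0_nonneg _ _), fun ε hε => ?_⟩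
  obtain ⟨N, hN⟩ := hy (ε / 2) (half_pos hε)
  obtain ⟨k, hk, hkN⟩ := ((hH.eventually (gt_mem_nhds (half_pos hε))).and
    (hφ.tendsto_atTop.eventually (eventually_ge_atTop N))).exists
  filter_upwards [eventually_ge_atTop N] with n hn
  linarith [dist0_triangle (y n) (y (φ k)) H, hN n hn (φ k) hkN,
    show dist0 P (y (φ k)) H < ε / 2 from hk]

theorem CauchySeq0.exists_tendsto0 {y : ℕ → Ω →ₘ[P] ℝ} (hy : CauchySeq0 P y) :
    ∃ H, Tendsto0 P y H := by
  have hfast : ∀ k : ℕ, ∀ᶠ n in atTop, ∀ m ≥ n, dist0 P (y m) (y n) < (1 / 2) ^ k := by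
    intro k
    obtain ⟨N, hN⟩ := hy ((1 / 2) ^ k) (by positivity)
    filter_upwards [eventually_ge_atTop N] with n hn m hm using hN m (hn.trans hm) n hn
  obtain ⟨φ, hφ, hfast⟩ := extraction_forall_of_eventually hfast
  have hs : Summable fun k => dist0 P (y (φ (k + 1))) (y (φ k)) := by
    refine Summable.of_nonneg_of_le (fun k => dist0_nonneg _ _) (fun k => ?_) summable_geometric_two
    exact (hfast k (φ (k + 1)) (hφ.monotone k.le_succ)).le
  obtain ⟨H, hH⟩ := exists_ae_tendsto_of_summable_dist0 (y := y ∘ φ) hs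
  exact ⟨H, hy.tendsto0_of_subseq hφ (tendsto0_of_ae_tendsto hH)⟩

end Completeness

section ExpBounds

open Real

-- The midpoint concavity defect of `t ↦ 1 - exp (-t)` is a perfect square.
lemma sq_exp_neg_half_sub (p q : ℝ) :
    (exp (-(p / 2)) - exp (-(q / 2))) ^ 2 =
      2 * (1 - exp (-(2⁻¹ * p + 2⁻¹ * q))) - (1 - exp (-p)) - (1 - exp (-q)) := by
  have hp : exp (-p) = exp (-(p / 2)) ^ 2 := by rw [← exp_nat_mul]; ring_nf
  have hq : exp (-q) = exp (-(q / 2)) ^ 2 := by rw [← exp_nat_mul]; ring_nf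
  have hpq : exp (-(2⁻¹ * p + 2⁻¹ * q)) = exp (-(p / 2)) * exp (-(q / 2)) := by
    rw [← exp_add]; ring_nf
  rw [hp, hq, hpq]; ring

lemma le_abs_exp_neg_half_sub {p q δ M : ℝ} (hpM : p ≤ M) (hqM : q ≤ M) (hδ : δ ≤ |p - q|) :
    exp (-(M / 2)) * (1 - exp (-(δ / 2))) ≤ |exp (-(p / 2)) - exp (-(q / 2))| := by
  wlog hpq : p ≤ q generalizing p q
  · rw [abs_sub_comm]; exact this hqM hpM (by rwa [abs_sub_comm]) (le_of_not_ge hpq)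
  rw [abs_sub_comm, abs_of_nonneg (by linarith)] at hδ
  have hsplit : exp (-(q / 2)) = exp (-(p / 2)) * exp (-((q - p) / 2)) := by
    rw [← exp_add]; ring_nf
  have hgap : 0 ≤ 1 - exp (-((q - p) / 2)) := sub_nonneg.2 (exp_le_one_iff.2 (by linarith))
  rw [hsplit, ← mul_one_sub, abs_of_nonneg (mul_nonneg (exp_pos _).le hgap)]
  refine mul_le_mul_of_nonneg (exp_le_exp.2 (by linarith)) ?_ (exp_pos _).le hgap
  linarith [exp_le_exp.2 (show -((q - p) / 2) ≤ -(δ / 2) by linarith)]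

lemma min_one_abs_sub_le {p q δ M : ℝ} (hp : 0 ≤ p) (hq : 0 ≤ q) (hδ : 0 < δ) (hM : 0 < M) :
    min 1 |p - q| ≤ δ + min 1 (p / M) + min 1 (q / M) +
      (exp (-(p / 2)) - exp (-(q / 2))) ^ 2 / (exp (-(M / 2)) * (1 - exp (-(δ / 2)))) ^ 2 := by
  have hc : 0 < exp (-(M / 2)) * (1 - exp (-(δ / 2))) :=
    mul_pos (exp_pos _) (sub_pos.2 (exp_lt_one_iff.2 (by linarith)))
  have hpM : 0 ≤ min 1 (p / M) := le_min zero_le_one (div_nonneg hp hM.le)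
  have hqM : 0 ≤ min 1 (q / M) := le_min zero_le_one (div_nonneg hq hM.le)
  have hsq : 0 ≤ (exp (-(p / 2)) - exp (-(q / 2))) ^ 2 /
      (exp (-(M / 2)) * (1 - exp (-(δ / 2)))) ^ 2 := by positivity
  rcases le_or_gt |p - q| δ with hpq | hpq
  · linarith [min_le_right 1 |p - q|]
  rcases le_or_gt p M with hpM' | hpM'
  swap
  · rw [min_eq_left ((one_le_div₀ hM).2 hpM'.le)]; linarith [min_le_left 1 |p - q|]
  rcases le_or_gt q M with hqM' | hqM'
  swap
  · rw [min_eq_left ((one_le_div₀ hM).2 hqM'.le)]; linarith [min_le_left 1 |p - q|]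
  have hone : 1 ≤ (exp (-(p / 2)) - exp (-(q / 2))) ^ 2 /
      (exp (-(M / 2)) * (1 - exp (-(δ / 2)))) ^ 2 := by
    rw [one_le_div (by positivity), ← sq_abs (exp _ - _)]
    exact pow_le_pow_left₀ hc.le (le_abs_exp_neg_half_sub hpM' hqM' hpq.le) 2
  linarith [min_le_left 1 |p - q|]

end ExpBounds

lemma exists_seq_lt_add_of_antitone {X : Type*} {A : ℕ → Set X} (hA : Antitone A)
    (hne : ∀ n, (A n).Nonempty) {U : X → ℝ} (hU : BddAbove (U '' A 0))
    (hU' : BddBelow (U '' A 0)) :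
    ∃ y : ℕ → X, (∀ n, y n ∈ A n) ∧ ∀ η > 0, ∃ N, ∀ n ≥ N, ∀ z ∈ A N, U z < U (y n) + η := by
  set s : ℕ → ℝ := fun n => sSup (U '' A n)
  have hbdd : ∀ n, BddAbove (U '' A n) := fun n => hU.mono (image_mono (hA (Nat.zero_le n)))
  have hs_anti : Antitone s := fun m n hmn =>
    csSup_le_csSup (hbdd m) ((hne n).image U) (image_mono (hA hmn))
  have hs_bdd : BddBelow (range s) := by
    obtain ⟨L, hL⟩ := hU'
    refine ⟨L, ?_⟩
    rintro _ ⟨n, rfl⟩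
    obtain ⟨z, hz⟩ := hne n
    exact (hL ⟨z, hA (Nat.zero_le n) hz, rfl⟩).trans (le_csSup (hbdd n) ⟨z, hz, rfl⟩)
  have happrox : ∀ n : ℕ, ∃ z ∈ A n, s n - 1 / (n + 1) < U z := fun n => by
    obtain ⟨_, ⟨z, hz, rfl⟩, hlt⟩ :=
      exists_lt_of_lt_csSup ((hne n).image U) (sub_lt_self (s n) Nat.one_div_pos_of_nat)
    exact ⟨z, hz, hlt⟩
  choose y hyA hy using happrox
  refine ⟨y, hyA, fun η hη => ?_⟩
  obtain ⟨N, hN⟩ := eventually_atTop.1 <|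
    ((tendsto_atTop_ciInf hs_anti hs_bdd).eventually
      (gt_mem_nhds (lt_add_of_pos_right _ (half_pos hη)))).and
    (tendsto_one_div_add_atTop_nhds_zero_nat.eventually (gt_mem_nhds (half_pos hη)))
  refine ⟨N, fun n hn z hz => ?_⟩
  linarith [le_csSup (hbdd N) (mem_image_of_mem U hz), (hN N le_rfl).1, (hN n hn).2, hy n,
    ciInf_le hs_bdd n]

section Komlos

variable {Ω : Type*} [MeasurableSpace Ω]

noncomputable def expUtility (P : Measure Ω) (v : Ω →ₘ[P] ℝ) : ℝ :=
  ∫ ω, (1 - Real.exp (-v ω)) ∂P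

variable {P : Measure Ω}

lemma integrable_one_sub_exp_neg [IsFiniteMeasure P] {v : Ω → ℝ} (hv : AEStronglyMeasurable v P)
    (h0 : 0 ≤ᵐ[P] v) : Integrable (fun ω => 1 - Real.exp (-v ω)) P := by
  refine (integrable_const (1 : ℝ)).mono' (by fun_prop) ?_
  filter_upwards [h0] with ω hω
  have : Real.exp (-v ω) ≤ 1 := Real.exp_le_one_iff.2 (neg_nonpos.2 hω)
  rw [Real.norm_eq_abs, abs_of_nonneg (by linarith)]
  linarith [Real.exp_pos (-v ω)]

variable [IsProbabilityMeasure P]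

lemma truncMean_div_le (v : Ω →ₘ[P] ℝ) (h0 : 0 ≤ᵐ[P] v) {ℓ M : ℝ} (hℓ : 0 ≤ ℓ) (hM : 0 < M) :
    truncMean P (fun ω => v ω / M) ≤ ℓ / M + P.real {ω | ℓ < v ω} := by
  have hs : MeasurableSet {ω | ℓ < v ω} := measurableSet_lt measurable_const v.measurable
  calc truncMean P (fun ω => v ω / M)
      ≤ ∫ ω, (ℓ / M + {ω | ℓ < v ω}.indicator 1 ω) ∂P := by
        refine integral_mono_of_nonneg ?_ ((integrable_const _).add
          ((integrable_const 1).indicator hs)) (ae_of_all _ fun ω => ?_)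
        · filter_upwards [h0] with ω hω using le_min zero_le_one (div_nonneg hω hM.le)
        by_cases hω : ℓ < v ω
        · simp only [indicator_of_mem (show ω ∈ {ω | ℓ < v ω} from hω), Pi.one_apply]
          linarith [min_le_left 1 (v ω / M), div_nonneg hℓ hM.le]
        · simp only [indicator_of_notMem (show ω ∉ {ω | ℓ < v ω} from hω), add_zero]
          exact (min_le_right _ _).trans (div_le_div_of_nonneg_right (not_lt.1 hω) hM.le)
    _ = ℓ / M + P.real {ω | ℓ < v ω} := by
        rw [integral_add (integrable_const _) ((integrable_const 1).indicator hs),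
          integral_indicator_one hs]
        simp

lemma Bounded0.exists_truncMean_div_le {C : Set (Ω →ₘ[P] ℝ)} (hC : C ⊆ L0plus P)
    (hbdd : Bounded0 P C) {ε : ℝ} (hε : 0 < ε) :
    ∃ M > 0, ∀ v ∈ C, truncMean P (fun ω => v ω / M) ≤ ε := by
  obtain ⟨ℓ, hℓ, hℓ0⟩ := ((ENNReal.tendsto_nhds_zero.1 hbdd (ENNReal.ofReal (ε / 2))
    (by simpa using half_pos hε)).and (eventually_ge_atTop 0)).exists
  have hM : 0 < 2 * ℓ / ε + 1 := by positivity
  refine ⟨2 * ℓ / ε + 1, hM, fun v hv => ?_⟩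
  have htail : P.real {ω | ℓ < v ω} ≤ ε / 2 := ENNReal.toReal_le_of_le_ofReal
    (half_pos hε).le ((le_biSup (fun f : Ω →ₘ[P] ℝ => P {ω | ℓ < f ω}) hv).trans hℓ)
  have hℓM : ℓ / (2 * ℓ / ε + 1) ≤ ε / 2 := by
    rw [div_le_iff₀ hM]; field_simp; linarith
  linarith [truncMean_div_le v (ae_nonneg_of_mem_L0plus (hC hv)) hℓ0 hM]

lemma expUtility_mem_Icc {v : Ω →ₘ[P] ℝ} (hv : v ∈ L0plus P) : expUtility P v ∈ Icc 0 1 := by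
  have h0 := ae_nonneg_of_mem_L0plus hv
  constructor
  · refine integral_nonneg_of_ae ?_
    filter_upwards [h0] with ω hω
    exact sub_nonneg.2 (Real.exp_le_one_iff.2 (by simpa using hω))
  · calc expUtility P v ≤ ∫ _, (1 : ℝ) ∂P :=
          integral_mono (integrable_one_sub_exp_neg v.aestronglyMeasurable h0)
            (integrable_const 1) fun ω => by linarith [Real.exp_pos (-v ω)]
      _ = 1 := by simp

lemma dist0_le_expUtility {a b : Ω →ₘ[P] ℝ} (ha : a ∈ L0plus P) (hb : b ∈ L0plus P) {δ M : ℝ}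
    (hδ : 0 < δ) (hM : 0 < M) :
    dist0 P a b ≤ δ + truncMean P (fun ω => a ω / M) + truncMean P (fun ω => b ω / M) +
      (2 * expUtility P ((2⁻¹ : ℝ) • a + (2⁻¹ : ℝ) • b) - expUtility P a - expUtility P b) /
        (Real.exp (-(M / 2)) * (1 - Real.exp (-(δ / 2)))) ^ 2 := by
  set c := Real.exp (-(M / 2)) * (1 - Real.exp (-(δ / 2)))
  have ha0 := ae_nonneg_of_mem_L0plus ha
  have hb0 := ae_nonneg_of_mem_L0plus hb
  have hmid : ⇑((2⁻¹ : ℝ) • a + (2⁻¹ : ℝ) • b) =ᵐ[P] fun ω => 2⁻¹ * a ω + 2⁻¹ * b ω := by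
    filter_upwards [AEEqFun.coeFn_add ((2⁻¹ : ℝ) • a) ((2⁻¹ : ℝ) • b),
      AEEqFun.coeFn_smul (2⁻¹ : ℝ) a, AEEqFun.coeFn_smul (2⁻¹ : ℝ) b] with ω h h1 h2
    simp [h, h1, h2]
  have hmid0 : 0 ≤ᵐ[P] fun ω => 2⁻¹ * a ω + 2⁻¹ * b ω := by
    filter_upwards [ha0, hb0] with ω h1 h2
    simp only [Pi.zero_apply] at h1 h2 ⊢
    positivity
  have iaM := integrable_min_one (P := P) (v := fun ω => a ω / M) (by fun_prop)
    (by filter_upwards [ha0] with ω h using div_nonneg h hM.le)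
  have ibM := integrable_min_one (P := P) (v := fun ω => b ω / M) (by fun_prop)
    (by filter_upwards [hb0] with ω h using div_nonneg h hM.le)
  have iu := integrable_one_sub_exp_neg (P := P) (by fun_prop) hmid0
  have iua := integrable_one_sub_exp_neg a.aestronglyMeasurable ha0
  have iub := integrable_one_sub_exp_neg b.aestronglyMeasurable hb0
  have hU : expUtility P ((2⁻¹ : ℝ) • a + (2⁻¹ : ℝ) • b) =
      ∫ ω, (1 - Real.exp (-(2⁻¹ * a ω + 2⁻¹ * b ω))) ∂P :=
    integral_congr_ae <| by filter_upwards [hmid] with ω hω; rw [hω]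
  have iδa : Integrable (fun ω => δ + min 1 (a ω / M)) P := (integrable_const δ).add iaM
  have itrunc : Integrable (fun ω => δ + min 1 (a ω / M) + min 1 (b ω / M)) P := iδa.add ibM
  have iu2 : Integrable (fun ω => 2 * (1 - Real.exp (-(2⁻¹ * a ω + 2⁻¹ * b ω)))) P :=
    iu.const_mul 2
  have iu2a : Integrable (fun ω => 2 * (1 - Real.exp (-(2⁻¹ * a ω + 2⁻¹ * b ω))) -
      (1 - Real.exp (-a ω))) P := iu2.sub iua
  have igap : Integrable (fun ω => 2 * (1 - Real.exp (-(2⁻¹ * a ω + 2⁻¹ * b ω))) -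
      (1 - Real.exp (-a ω)) - (1 - Real.exp (-b ω))) P := iu2a.sub iub
  calc dist0 P a b
      ≤ ∫ ω, (δ + min 1 (a ω / M) + min 1 (b ω / M) +
          (2 * (1 - Real.exp (-(2⁻¹ * a ω + 2⁻¹ * b ω))) - (1 - Real.exp (-a ω)) -
            (1 - Real.exp (-b ω))) / c ^ 2) ∂P := by
        refine integral_mono_of_nonneg (ae_of_all _ fun ω => le_min zero_le_one (abs_nonneg _))
          (itrunc.add (igap.div_const _)) ?_
        filter_upwards [ha0, hb0] with ω h1 h2
        rw [← sq_exp_neg_half_sub]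
        exact min_one_abs_sub_le h1 h2 hδ hM
    _ = _ := by
        rw [integral_add itrunc (igap.div_const _), integral_add iδa ibM,
          integral_add (integrable_const δ) iaM, integral_div, integral_sub iu2a iub,
          integral_sub iu2 iua, integral_const_mul, hU]
        simp [truncMean, expUtility]

theorem exists_forwardConvexComb_cauchySeq0 {C : Set (Ω →ₘ[P] ℝ)} (hC : C ⊆ L0plus P)
    (hconv : Convex ℝ C) (hbdd : Bounded0 P C) {x : ℕ → Ω →ₘ[P] ℝ} (hx : ∀ n, x n ∈ C) :
    ∃ y, ForwardConvexComb P x y ∧ CauchySeq0 P y := by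
  set A : ℕ → Set (Ω →ₘ[P] ℝ) := fun n => convexHull ℝ (x '' Ici n)
  have hAC : ∀ n, A n ⊆ C := fun n => convexHull_min (image_subset_iff.2 fun m _ => hx m) hconv
  have hA : Antitone A := fun m n h => convexHull_mono (image_mono (Ici_subset_Ici.2 h))
  have hne : ∀ n, (A n).Nonempty := fun n =>
    ⟨x n, subset_convexHull ℝ _ ⟨n, self_mem_Ici, rfl⟩⟩
  have hU : ∀ z ∈ A 0, expUtility P z ∈ Icc 0 1 := fun z hz => expUtility_mem_Icc (hC (hAC 0 hz))
  obtain ⟨y, hyA, hy⟩ := exists_seq_lt_add_of_antitone hA hne (U := expUtility P)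
    ⟨1, by rintro _ ⟨z, hz, rfl⟩; exact (hU z hz).2⟩
    ⟨0, by rintro _ ⟨z, hz, rfl⟩; exact (hU z hz).1⟩
  refine ⟨y, hyA, fun ε hε => ?_⟩
  obtain ⟨M, hM, htail⟩ := hbdd.exists_truncMean_div_le hC (by positivity : 0 < ε / 8)
  set c := Real.exp (-(M / 2)) * (1 - Real.exp (-(ε / 4 / 2)))
  have hc : 0 < c := mul_pos (Real.exp_pos _) (sub_pos.2 (Real.exp_lt_one_iff.2 (by linarith)))
  obtain ⟨N, hN⟩ := hy (c ^ 2 * ε / 8) (by positivity)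
  refine ⟨N, fun m hm n hn => ?_⟩
  have hmid : (2⁻¹ : ℝ) • y m + (2⁻¹ : ℝ) • y n ∈ A N :=
    convex_convexHull ℝ _ (hA hm (hyA m)) (hA hn (hyA n)) (by norm_num) (by norm_num) (by norm_num)
  have hgap : (2 * expUtility P ((2⁻¹ : ℝ) • y m + (2⁻¹ : ℝ) • y n) - expUtility P (y m) -
      expUtility P (y n)) / c ^ 2 < ε / 4 := by
    rw [div_lt_iff₀ (by positivity)]
    linarith [hN m hm _ hmid, hN n hn _ hmid]
  linarith [dist0_le_expUtility (hC (hAC m (hyA m))) (hC (hAC n (hyA n)))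
    (by positivity : 0 < ε / 4) hM, htail _ (hAC m (hyA m)), htail _ (hAC n (hyA n))]

end Komlos

/-- Let `C ⊆ L⁰₊` be convexly compact and `(f n)` a `C`-valued sequence
converging in probability to `g ∈ C^max`. Then every sequence of forward convex
combinations of `(f n)` also converges in probability to `g`. -/
theorem statement8 {Ω : Type*} [MeasurableSpace Ω] (P : Measure Ω) [IsProbabilityMeasure P]
    (C : Set (Ω →ₘ[P] ℝ)) (hCL0 : C ⊆ L0plus P)
    (hconv : Convex ℝ C) (hcl : IsClosed0 P C) (hbdd : Bounded0 P C)
    (f : ℕ → Ω →ₘ[P] ℝ) (hf : ∀ n, f n ∈ C)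
    (g : Ω →ₘ[P] ℝ) (hg : g ∈ maxSet P C) (hconvg : Tendsto0 P f g)
    (h : ℕ → Ω →ₘ[P] ℝ) (hfcc : ForwardConvexComb P f h) :
    Tendsto0 P h g := by
  have hhC : ∀ n, h n ∈ C := hfcc.mem_of_convex hconv hf
  have hgh : Tendsto (fun n => truncMean P fun ω => (g ω - h n ω)⁺) atTop (𝓝 0) :=
    tendsto_truncMean_posPart_sub_of_forwardConvexComb (hCL0 hg.1) (fun n => hCL0 (hf n)) hfcc
      hconvg.tendsto_truncMean_posPart_sub
  by_contra hnot
  obtain ⟨c, hc, φ, hφ, hexcess⟩ := exists_strictMono_le_truncMean_posPart_sub hnot hgh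
  have hghφ := hgh.comp hφ.tendsto_atTop
  have hhφ : ∀ k, h (φ k) ∈ L0plus P := fun k => hCL0 (hhC (φ k))
  obtain ⟨y, hy, hcauchy⟩ := exists_forwardConvexComb_cauchySeq0 hCL0 hconv hbdd (hhC <| φ ·)
  obtain ⟨H, hyH⟩ := hcauchy.exists_tendsto0
  have hHC : H ∈ C := hcl (mem_closure0_of_tendsto0 (hy.mem_of_convex hconv (hhC <| φ ·)) hyH)
  have hgH : g = H := hg.2 H hHC (le_of_tendsto0_of_tendsto_truncMean_posPart_sub hyH
    (tendsto_truncMean_posPart_sub_of_forwardConvexComb (hCL0 hg.1) hhφ hy hghφ))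
  subst hgH
  obtain ⟨k, hk⟩ := exists_truncMean_posPart_sub_lt (hCL0 hg.1) hhφ hy hghφ hyH hc
  exact (hexcess k).not_gt hk
end

section
/- Let C ⊆ L0+ be convex and bounded. Then there exists a probability measure Q on (Ω, F), equivalent to P, such that sup_{f ∈ C} E_Q[f] < ∞. -/
open MeasureTheory Filter Set

/-!
Halmos–Savage exhaustion. Call a measurable `h ≥ 0` admissible if `E[h] ≤ 1` and `E[f h] ≤ 1`
for all `f ∈ C`, i.e. if `h` lies in the polar of `C ∪ {1}`. Admissible densities are closed
under countable convex combinations, so some admissible `h*` has a support of maximal measure.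
If `A = {h* = 0}` were not null, pick `ℓ` with `P[f > ℓ] < P(A) / 2` for all `f ∈ C`. The
square-integrable functions dominated by elements of `C` form a convex set whose `L²`-closure
still satisfies `P[· > ℓ + 1] ≤ P(A) / 2`, so Hahn–Banach separates `(ℓ + 2) 1_A` from it. The
positive part on `A` of the separating functional, suitably scaled, is an admissible density
charging `A`, contradicting maximality. Finally `dQ = h* / E[h*] dP`.
-/

open scoped ENNReal

namespace L0plus

variable {Ω : Type*} [MeasurableSpace Ω] {P : Measure Ω}

/-- The polar of `C` in `L⁰₊`, with its elements represented by measurable `ℝ≥0∞`-valued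
functions. -/
def polar0 (P : Measure Ω) (C : Set (Ω →ₘ[P] ℝ)) : Set (Ω → ℝ≥0∞) :=
  {h | Measurable h ∧ ∀ f ∈ C, ∫⁻ ω, ENNReal.ofReal (f ω) * h ω ∂P ≤ 1}

lemma zero_mem_polar0 (C : Set (Ω →ₘ[P] ℝ)) : 0 ∈ polar0 P C :=
  ⟨measurable_const, fun _ _ => by simp⟩

lemma _root_.ENNReal.tsum_inv_two_pow_succ : ∑' n : ℕ, (2⁻¹ : ℝ≥0∞) ^ (n + 1) = 1 := by
  rw [ENNReal.tsum_geometric_add_one, ENNReal.one_sub_inv_two, inv_inv,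
    ENNReal.inv_mul_cancel two_ne_zero ENNReal.ofNat_ne_top]

lemma setOf_pos_subset_tsum {α : Type*} (h : ℕ → α → ℝ≥0∞) (n : ℕ) :
    {a | 0 < h n a} ⊆ {a | 0 < ∑' m, (2⁻¹ : ℝ≥0∞) ^ (m + 1) * h m a} := fun _ ha =>
  (ENNReal.mul_pos (pow_ne_zero _ (by simp)) ha.ne').trans_le (ENNReal.le_tsum n)

lemma tsum_mem_polar0 {C : Set (Ω →ₘ[P] ℝ)} {h : ℕ → Ω → ℝ≥0∞} (hh : ∀ n, h n ∈ polar0 P C) :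
    (fun ω => ∑' n, (2⁻¹ : ℝ≥0∞) ^ (n + 1) * h n ω) ∈ polar0 P C := by
  refine ⟨Measurable.tsum fun n => (hh n).1.const_mul _, fun f hf => ?_⟩
  calc ∫⁻ ω, ENNReal.ofReal (f ω) * ∑' n, 2⁻¹ ^ (n + 1) * h n ω ∂P
      = ∑' n, 2⁻¹ ^ (n + 1) * ∫⁻ ω, ENNReal.ofReal (f ω) * h n ω ∂P := by
        simp_rw [← ENNReal.tsum_mul_left, mul_left_comm (ENNReal.ofReal _)]
        refine (lintegral_tsum fun n =>
          (f.aemeasurable.ennreal_ofReal.mul (hh n).1.aemeasurable).const_mul _).trans ?_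
        exact tsum_congr fun n => lintegral_const_mul' _ _ (by simp)
    _ ≤ ∑' n : ℕ, 2⁻¹ ^ (n + 1) * 1 := by gcongr with n; exact (hh n).2 f hf
    _ = 1 := by simpa using ENNReal.tsum_inv_two_pow_succ

theorem exists_ae_pos_of_tsum_mem [IsFiniteMeasure P] {H : Set (Ω → ℝ≥0∞)}
    (hH_meas : ∀ h ∈ H, Measurable h) (hH_ne : H.Nonempty)
    (hH_tsum : ∀ h : ℕ → Ω → ℝ≥0∞, (∀ n, h n ∈ H) →
      (fun ω => ∑' n, (2⁻¹ : ℝ≥0∞) ^ (n + 1) * h n ω) ∈ H)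
    (hH_loc : ∀ A, MeasurableSet A → P A ≠ 0 → ∃ h ∈ H, P (A ∩ {ω | 0 < h ω}) ≠ 0) :
    ∃ h ∈ H, ∀ᵐ ω ∂P, 0 < h ω := by
  set p := sSup ((fun h => P {ω | 0 < h ω}) '' H)
  obtain ⟨v, -, hv_lim, hv_mem⟩ :=
    exists_seq_tendsto_sSup (hH_ne.image fun h => P {ω | 0 < h ω}) (OrderTop.bddAbove _)
  choose h hh hv using hv_mem
  set hsup := fun ω => ∑' n, (2⁻¹ : ℝ≥0∞) ^ (n + 1) * h n ω
  have hsup_mem : hsup ∈ H := hH_tsum h hh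
  have hp_le : p ≤ P {ω | 0 < hsup ω} :=
    le_of_tendsto' hv_lim fun n => hv n ▸ measure_mono (setOf_pos_subset_tsum h n)
  refine ⟨hsup, hsup_mem, ?_⟩
  by_contra hne
  set A := {ω | hsup ω = 0}
  have hA : P A ≠ 0 := by simpa [ae_iff, A, pos_iff_ne_zero] using hne
  obtain ⟨k, hk, hAk⟩ := hH_loc A (hH_meas _ hsup_mem (measurableSet_singleton 0)) hA
  -- `hsup / 2 + k / 2` charges strictly more than `hsup`, contradicting maximality
  set g : ℕ → Ω → ℝ≥0∞ := fun n => if n = 0 then hsup else k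
  have hg : ∀ n, g n ∈ H := fun n => by by_cases hn : n = 0 <;> simp [g, hn, hsup_mem, hk]
  have hcharge : P {ω | 0 < hsup ω} + P (A ∩ {ω | 0 < k ω}) ≤ P {ω | 0 < hsup ω} + 0 :=
    calc P {ω | 0 < hsup ω} + P (A ∩ {ω | 0 < k ω})
        = P ({ω | 0 < hsup ω} ∪ (A ∩ {ω | 0 < k ω})) :=
          (measure_union (disjoint_left.2 fun _ h1 h2 => h1.ne' h2.1)
            ((hH_meas _ hsup_mem (measurableSet_singleton 0)).inter
              (measurableSet_lt measurable_const (hH_meas k hk)))).symm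
      _ ≤ P {ω | 0 < ∑' n, (2⁻¹ : ℝ≥0∞) ^ (n + 1) * g n ω} :=
          measure_mono (union_subset (setOf_pos_subset_tsum g 0)
            (inter_subset_right.trans (setOf_pos_subset_tsum g 1)))
      _ ≤ p := le_sSup ⟨_, hH_tsum g hg, rfl⟩
      _ ≤ P {ω | 0 < hsup ω} + 0 := by rwa [add_zero]
  exact hAk (nonpos_iff_eq_zero.1 (ENNReal.le_of_add_le_add_left (measure_ne_top _ _) hcharge))

lemma measure_lt_add_one_le {p : ℝ≥0∞} (hp0 : p ≠ 0) (hp : p ≠ ∞) {x y : Ω → ℝ}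
    (hxy : AEStronglyMeasurable (x - y) P) (ℓ : ℝ) :
    P {ω | ℓ + 1 < x ω} ≤ P {ω | ℓ < y ω} + eLpNorm (x - y) p P ^ p.toReal := by
  have hsub : {ω | ℓ + 1 < x ω} ⊆ {ω | ℓ < y ω} ∪ {ω | 1 ≤ ‖(x - y) ω‖ₑ} := by
    intro ω hω
    by_cases hy : ℓ < y ω
    · exact Or.inl hy
    · refine Or.inr ?_
      have : 1 ≤ ‖(x - y) ω‖ := by
        rw [Pi.sub_apply, Real.norm_eq_abs]
        exact le_abs.2 (Or.inl (by linarith [show ℓ + 1 < x ω from hω, not_lt.1 hy]))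
      simpa [← ofReal_norm] using ENNReal.ofReal_le_ofReal this
  calc P {ω | ℓ + 1 < x ω} ≤ P {ω | ℓ < y ω} + P {ω | 1 ≤ ‖(x - y) ω‖ₑ} :=
        (measure_mono hsub).trans (measure_union_le _ _)
    _ ≤ P {ω | ℓ < y ω} + eLpNorm (x - y) p P ^ p.toReal := by
        gcongr
        simpa using meas_ge_le_mul_pow_eLpNorm_enorm P hp0 hp hxy one_ne_zero (by simp)

lemma measure_lt_add_one_le_of_mem_closure {p : ℝ≥0∞} [Fact (1 ≤ p)] (hp : p ≠ ∞)
    {S : Set (Lp ℝ p P)} {ℓ : ℝ} {ε : ℝ≥0∞} (hS : ∀ y ∈ S, P {ω | ℓ < y ω} ≤ ε)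
    {x : Lp ℝ p P} (hx : x ∈ closure S) : P {ω | ℓ + 1 < x ω} ≤ ε := by
  obtain ⟨y, hyS, hyx⟩ := mem_closure_iff_seq_limit.1 hx
  have hp0 : p ≠ 0 := (zero_lt_one.trans_le Fact.out).ne'
  have hp_pos : 0 < p.toReal := ENNReal.toReal_pos hp0 hp
  have hlim : Tendsto (fun n => ε + edist x (y n) ^ p.toReal) atTop (nhds (ε + 0)) := by
    refine tendsto_const_nhds.add ?_
    rw [← ENNReal.zero_rpow_of_pos hp_pos]
    exact (ENNReal.continuous_rpow_const.tendsto 0).comp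
      (by simpa [edist_comm] using (tendsto_iff_edist_tendsto_0.1 hyx))
  refine ge_of_tendsto' (by simpa using hlim) fun n => ?_
  rw [Lp.edist_def]
  exact (measure_lt_add_one_le hp0 hp
    ((Lp.aestronglyMeasurable x).sub (Lp.aestronglyMeasurable (y n))) ℓ).trans
    (add_le_add_left (hS _ (hyS n)) _)

lemma _root_.Bounded0.exists_forall_measure_lt {C : Set (Ω →ₘ[P] ℝ)} (hC : Bounded0 P C)
    {ε : ℝ≥0∞} (hε : 0 < ε) : ∃ ℓ : ℝ, 0 ≤ ℓ ∧ ∀ f ∈ C, P {ω | ℓ < f ω} < ε := by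
  obtain ⟨ℓ, hℓ, hℓ0⟩ := ((hC.eventually_lt_const hε).and (eventually_ge_atTop 0)).exists
  exact ⟨ℓ, hℓ0, fun f hf =>
    (le_iSup₂ (f := fun f (_ : f ∈ C) => P {ω | ℓ < f ω}) f hf).trans_lt hℓ⟩

lemma ae_nonneg_of_mem {f : Ω →ₘ[P] ℝ} (hf : f ∈ L0plus P) : ∀ᵐ ω ∂P, 0 ≤ f ω := by
  filter_upwards [AEEqFun.coeFn_le.2 hf, AEEqFun.coeFn_zero (β := ℝ) (μ := P)] with ω h h0
  rwa [h0] at h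

lemma convex_setOf_exists_ae_le {p : ℝ≥0∞} {C : Set (Ω →ₘ[P] ℝ)} (hC : Convex ℝ C) :
    Convex ℝ {x : Lp ℝ p P | ∃ f ∈ C, ∀ᵐ ω ∂P, x ω ≤ f ω} := by
  rintro x ⟨f, hf, hxf⟩ y ⟨g, hg, hyg⟩ a b ha hb hab
  refine ⟨a • f + b • g, hC hf hg ha hb hab, ?_⟩
  filter_upwards [hxf, hyg, Lp.coeFn_add (a • x) (b • y), Lp.coeFn_smul a x, Lp.coeFn_smul b y,
    AEEqFun.coeFn_add (a • f) (b • g), AEEqFun.coeFn_smul a f, AEEqFun.coeFn_smul b g]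
    with ω hx hy hxy hax hby hfg haf hbg
  simp only [hxy, hfg, Pi.add_apply, hax, hby, haf, hbg, Pi.smul_apply, smul_eq_mul]
  gcongr

lemma exists_memLp_two_apply_eq_integral (φ : StrongDual ℝ (Lp ℝ 2 P)) :
    ∃ g : Ω → ℝ, Measurable g ∧ MemLp g 2 P ∧ ∀ z : Lp ℝ 2 P, φ z = ∫ ω, g ω * z ω ∂P := by
  set g₂ := (InnerProductSpace.toDual ℝ (Lp ℝ 2 P)).symm φ
  have hg₂ : AEMeasurable g₂ P := (Lp.aestronglyMeasurable g₂).aemeasurable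
  refine ⟨hg₂.mk, hg₂.measurable_mk, (Lp.memLp g₂).ae_eq hg₂.ae_eq_mk, fun z => ?_⟩
  rw [← InnerProductSpace.toDual_symm_apply, L2.inner_def]
  refine integral_congr_ae ?_
  filter_upwards [hg₂.ae_eq_mk] with ω hω
  rw [← hω]
  simp [g₂, mul_comm]

theorem exists_separating_memLp [IsFiniteMeasure P] {C : Set (Ω →ₘ[P] ℝ)}
    (hconv : Convex ℝ C) (hbdd : Bounded0 P C) {A : Set Ω} (hA : MeasurableSet A)
    (hPA : P A ≠ 0) :
    ∃ g : Ω → ℝ, Measurable g ∧ MemLp g 2 P ∧ ∃ u b : ℝ, 0 ≤ b ∧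
      (∀ x : Ω → ℝ, MemLp x 2 P → (∃ f ∈ C, ∀ᵐ ω ∂P, x ω ≤ f ω) → ∫ ω, g ω * x ω ∂P < u) ∧
      u < ∫ ω, g ω * A.indicator (fun _ => b) ω ∂P := by
  obtain ⟨ℓ, hℓ0, hℓ⟩ := hbdd.exists_forall_measure_lt (ENNReal.half_pos hPA)
  set S := {x : Lp ℝ 2 P | ∃ f ∈ C, ∀ᵐ ω ∂P, x ω ≤ f ω}
  set x₀ := indicatorConstLp 2 hA (measure_ne_top P A) (ℓ + 2)
  have hx₀ : ∀ᵐ ω ∂P, x₀ ω = A.indicator (fun _ => ℓ + 2) ω := indicatorConstLp_coeFn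
  -- the tail bound of `C` passes to the closure of `S`, but fails for `x₀`
  have hx₀S : x₀ ∉ closure S := by
    intro hx
    have hS : ∀ y ∈ S, P {ω | ℓ < y ω} ≤ P A / 2 := fun y ⟨f, hf, hyf⟩ =>
      (measure_mono_ae (hyf.mono fun ω h1 h2 => h2.trans_le h1)).trans (hℓ f hf).le
    have hA_le : P A ≤ P {ω | ℓ + 1 < x₀ ω} := measure_mono_ae <| hx₀.mono fun ω h hωA => by
      show ℓ + 1 < x₀ ω
      rw [h, indicator_of_mem hωA]
      linarith
    exact (ENNReal.half_lt_self hPA (measure_ne_top P A)).not_ge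
      (hA_le.trans (measure_lt_add_one_le_of_mem_closure ENNReal.ofNat_ne_top hS hx))
  obtain ⟨φ, u, hφS, hφx₀⟩ := geometric_hahn_banach_closed_point
    (convex_setOf_exists_ae_le hconv).closure isClosed_closure hx₀S
  obtain ⟨g, hg, hg2, hφ⟩ := exists_memLp_two_apply_eq_integral φ
  refine ⟨g, hg, hg2, u, ℓ + 2, by linarith, fun x hx ⟨f, hf, hxf⟩ => ?_, ?_⟩
  · have hxS : hx.toLp x ∈ S := ⟨f, hf, hx.coeFn_toLp.symm.rw (fun ω y => y ≤ f ω) hxf⟩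
    have := hφS _ (subset_closure hxS)
    rwa [hφ, integral_congr_ae (hx.coeFn_toLp.mono fun ω h => by rw [h])] at this
  · rwa [hφ, integral_congr_ae (hx₀.mono fun ω h => by rw [h])] at hφx₀

lemma iSup_ofReal_min_natCast (x : ℝ) : ⨆ c : ℕ, ENNReal.ofReal (min x c) = ENNReal.ofReal x :=
  le_antisymm (iSup_le fun _ => ENNReal.ofReal_le_ofReal (min_le_left _ _))
    (le_iSup_of_le ⌈x⌉₊ (ENNReal.ofReal_le_ofReal (le_min le_rfl (Nat.le_ceil x))))

lemma lintegral_ofReal_mul_le_of_forall_integral_min_le {f k : Ω → ℝ} {u : ℝ}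
    (hf : AEMeasurable f P) (hf0 : ∀ᵐ ω ∂P, 0 ≤ f ω) (hk : Integrable k P) (hk0 : 0 ≤ k)
    (h : ∀ c : ℕ, ∫ ω, k ω * min (f ω) c ∂P ≤ u) :
    ∫⁻ ω, ENNReal.ofReal (f ω) * ENNReal.ofReal (k ω) ∂P ≤ ENNReal.ofReal u := by
  have htrunc (c : ℕ) :
      ∫⁻ ω, ENNReal.ofReal (min (f ω) c) * ENNReal.ofReal (k ω) ∂P ≤ ENNReal.ofReal u := by
    have hint : Integrable (fun ω => k ω * min (f ω) c) P :=
      hk.mul_bdd (hf.min aemeasurable_const).aestronglyMeasurable <| hf0.mono fun ω hω => by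
        rw [Real.norm_eq_abs, abs_of_nonneg (le_min hω c.cast_nonneg)]
        exact min_le_right _ _
    have hint0 : 0 ≤ᵐ[P] fun ω => k ω * min (f ω) c :=
      hf0.mono fun ω hω => mul_nonneg (hk0 ω) (le_min hω c.cast_nonneg)
    calc ∫⁻ ω, ENNReal.ofReal (min (f ω) c) * ENNReal.ofReal (k ω) ∂P
        = ENNReal.ofReal (∫ ω, k ω * min (f ω) c ∂P) := by
          rw [ofReal_integral_eq_lintegral_ofReal hint hint0]
          exact lintegral_congr fun ω => by rw [ENNReal.ofReal_mul (hk0 ω), mul_comm]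
      _ ≤ ENNReal.ofReal u := ENNReal.ofReal_le_ofReal (h c)
  calc ∫⁻ ω, ENNReal.ofReal (f ω) * ENNReal.ofReal (k ω) ∂P
      = ∫⁻ ω, ⨆ c : ℕ, ENNReal.ofReal (min (f ω) c) * ENNReal.ofReal (k ω) ∂P := by
        simp_rw [← ENNReal.iSup_mul, iSup_ofReal_min_natCast]
    _ = ⨆ c : ℕ, ∫⁻ ω, ENNReal.ofReal (min (f ω) c) * ENNReal.ofReal (k ω) ∂P :=
        lintegral_iSup' (fun c => (hf.min aemeasurable_const).ennreal_ofReal.mul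
          hk.aemeasurable.ennreal_ofReal) (ae_of_all _ fun ω c d hcd => by dsimp only; gcongr)
    _ ≤ ENNReal.ofReal u := iSup_le htrunc

lemma memLp_indicator_min_natCast [IsFiniteMeasure P] {p : ℝ≥0∞} {f : Ω → ℝ}
    (hf : AEMeasurable f P) (hf0 : ∀ᵐ ω ∂P, 0 ≤ f ω) {B : Set Ω} (hB : MeasurableSet B)
    (c : ℕ) : MemLp (B.indicator fun ω => min (f ω) c) p P := by
  refine .of_bound ((hf.min aemeasurable_const).aestronglyMeasurable.indicator hB) c ?_
  filter_upwards [hf0] with ω hω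
  rw [Real.norm_eq_abs, abs_le]
  by_cases hωB : ω ∈ B
  · simp only [indicator_of_mem hωB]
    exact ⟨by linarith [le_min hω c.cast_nonneg], min_le_right _ _⟩
  · simp [indicator_of_notMem hωB]

lemma lintegral_ofReal_one_mul (D : Ω → ℝ≥0∞) :
    ∫⁻ ω, ENNReal.ofReal ((1 : Ω →ₘ[P] ℝ) ω) * D ω ∂P = ∫⁻ ω, D ω ∂P :=
  lintegral_congr_ae <| (AEEqFun.coeFn_one (β := ℝ) (μ := P)).mono fun ω h => by simp [h]

lemma exists_const_mul_mem_polar0 {C : Set (Ω →ₘ[P] ℝ)} {D : Ω → ℝ≥0∞} (hD : Measurable D)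
    {U : ℝ≥0∞} (hU : U ≠ ∞) (hCD : ∀ f ∈ C, ∫⁻ ω, ENNReal.ofReal (f ω) * D ω ∂P ≤ U) :
    ∃ a : ℝ≥0∞, a ≠ 0 ∧ (fun ω => a * D ω) ∈ polar0 P C := by
  refine ⟨(U + 1)⁻¹, ENNReal.inv_ne_zero.2 (by simpa using hU), hD.const_mul _, fun f hf => ?_⟩
  calc ∫⁻ ω, ENNReal.ofReal (f ω) * ((U + 1)⁻¹ * D ω) ∂P
      = (U + 1)⁻¹ * ∫⁻ ω, ENNReal.ofReal (f ω) * D ω ∂P := by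
        simp_rw [mul_left_comm (ENNReal.ofReal _)]
        exact lintegral_const_mul' _ _ (by simp)
    _ ≤ (U + 1)⁻¹ * (U + 1) := by gcongr; exact (hCD f hf).trans le_self_add
    _ = 1 := ENNReal.inv_mul_cancel (by simp) (by simpa using hU)

theorem exists_density_measure_inter_ne_zero [IsFiniteMeasure P]
    {C : Set (Ω →ₘ[P] ℝ)} (hCne : C.Nonempty) (hCL0 : C ⊆ L0plus P) (hconv : Convex ℝ C)
    (hbdd : Bounded0 P C) {A : Set Ω} (hA : MeasurableSet A) (hPA : P A ≠ 0) :
    ∃ k : Ω → ℝ, Measurable k ∧ 0 ≤ k ∧ Integrable k P ∧ P (A ∩ {ω | 0 < k ω}) ≠ 0 ∧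
      ∃ u : ℝ, ∀ f ∈ C,
        ∫⁻ ω, ENNReal.ofReal (f ω) * ENNReal.ofReal (k ω) ∂P ≤ ENNReal.ofReal u := by
  obtain ⟨g, hg, hg2, u, b, hb, hsep, hx₀⟩ := exists_separating_memLp hconv hbdd hA hPA
  set B := A ∩ {ω | 0 < g ω}
  have hB : MeasurableSet B := hA.inter (measurableSet_lt measurable_const hg)
  set k := B.indicator g
  have hk0 : 0 ≤ k := indicator_nonneg fun ω hω => hω.2.le
  have hk : Integrable k P := (hg2.integrable one_le_two).indicator hB
  have hku : ∀ f ∈ C, ∀ c : ℕ, ∫ ω, k ω * min (f ω) c ∂P ≤ u := by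
    intro f hf c
    have hf0 := ae_nonneg_of_mem (hCL0 hf)
    set x := B.indicator fun ω => min (f ω) c
    have hxf : ∀ᵐ ω ∂P, x ω ≤ f ω := hf0.mono fun ω hω => by
      by_cases hωB : ω ∈ B
      · simp [x, indicator_of_mem hωB]
      · simpa [x, indicator_of_notMem hωB] using hω
    calc ∫ ω, k ω * min (f ω) c ∂P = ∫ ω, g ω * x ω ∂P := integral_congr_ae <| ae_of_all _
          fun ω => by by_cases hωB : ω ∈ B <;> simp [k, x, hωB]
      _ ≤ u := (hsep x (memLp_indicator_min_natCast f.aemeasurable hf0 hB c) ⟨f, hf, hxf⟩).le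
  have hu : 0 < u := by
    obtain ⟨f, hf⟩ := hCne
    simpa using hsep 0 MemLp.zero ⟨f, hf, ae_nonneg_of_mem (hCL0 hf)⟩
  -- otherwise `∫ g (b 1_A) ≤ 0 < u`
  have hPB : P B ≠ 0 := by
    intro hB0
    have : ∫ ω, g ω * A.indicator (fun _ => b) ω ∂P ≤ 0 := integral_nonpos_of_ae <|
      (measure_eq_zero_iff_ae_notMem.1 hB0).mono fun ω hωB => by
        by_cases hωA : ω ∈ A
        · simpa [indicator_of_mem hωA] using
            mul_nonpos_of_nonpos_of_nonneg (not_lt.1 fun h => hωB ⟨hωA, h⟩) hb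
        · simp [indicator_of_notMem hωA]
    linarith
  refine ⟨k, hg.indicator hB, hk0, hk, fun h0 => hPB (measure_mono_null ?_ h0), u,
    fun f hf => lintegral_ofReal_mul_le_of_forall_integral_min_le f.aemeasurable
      (ae_nonneg_of_mem (hCL0 hf)) hk hk0 (hku f hf)⟩
  exact fun ω hω => ⟨hω.1, by simpa [k, indicator_of_mem hω] using hω.2⟩

theorem exists_mem_polar0_measure_inter_ne_zero [IsFiniteMeasure P]
    {C : Set (Ω →ₘ[P] ℝ)} (hCne : C.Nonempty) (hCL0 : C ⊆ L0plus P) (hconv : Convex ℝ C)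
    (hbdd : Bounded0 P C) {A : Set Ω} (hA : MeasurableSet A) (hPA : P A ≠ 0) :
    ∃ h ∈ polar0 P (insert 1 C), P (A ∩ {ω | 0 < h ω}) ≠ 0 := by
  obtain ⟨k, hk_meas, hk0, hk, hPAk, u, hku⟩ :=
    exists_density_measure_inter_ne_zero hCne hCL0 hconv hbdd hA hPA
  obtain ⟨a, ha, haD⟩ := exists_const_mul_mem_polar0 (C := insert 1 C)
    hk_meas.ennreal_ofReal (U := ENNReal.ofReal (∫ ω, k ω ∂P) + ENNReal.ofReal u) (by simp) <| by
      rintro f (rfl | hf)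
      · rw [lintegral_ofReal_one_mul, ← ofReal_integral_eq_lintegral_ofReal hk (ae_of_all _ hk0)]
        exact le_self_add
      · exact (hku f hf).trans le_add_self
  have hsub : A ∩ {ω | 0 < k ω} ⊆ A ∩ {ω | 0 < a * ENNReal.ofReal (k ω)} := fun ω hω =>
    ⟨hω.1, by simpa [pos_iff_ne_zero, ha] using hω.2⟩
  exact ⟨_, haD, fun h0 => hPAk (measure_mono_null hsub h0)⟩

theorem exists_isProbabilityMeasure_equiv_of_mem_polar0 [NeZero P]
    {C : Set (Ω →ₘ[P] ℝ)} {h : Ω → ℝ≥0∞} (hh : h ∈ polar0 P (insert 1 C))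
    (hpos : ∀ᵐ ω ∂P, 0 < h ω) :
    ∃ Q : Measure Ω, IsProbabilityMeasure Q ∧ Q ≪ P ∧ P ≪ Q ∧ (⨆ f ∈ C, pairing Q f) < ⊤ := by
  set I := ∫⁻ ω, h ω ∂P
  have hI_top : I ≠ ∞ :=
    ((lintegral_ofReal_one_mul h).symm.trans_le (hh.2 1 (mem_insert _ _))).trans_lt
      ENNReal.one_lt_top |>.ne
  have hI_zero : I ≠ 0 := fun h0 => by
    obtain ⟨ω, hω, hω0⟩ := (hpos.and ((lintegral_eq_zero_iff hh.1).1 h0)).exists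
    exact hω.ne' hω0
  set Q := P.withDensity fun ω => I⁻¹ * h ω
  have hQ : IsProbabilityMeasure Q := ⟨by
    rw [withDensity_apply _ MeasurableSet.univ, Measure.restrict_univ,
      lintegral_const_mul _ hh.1, ENNReal.inv_mul_cancel hI_zero hI_top]⟩
  refine ⟨Q, hQ, withDensity_absolutelyContinuous _ _,
    withDensity_absolutelyContinuous' (hh.1.const_mul _).aemeasurable
      (hpos.mono fun ω hω => mul_ne_zero (ENNReal.inv_ne_zero.2 hI_top) hω.ne'), ?_⟩
  refine (iSup₂_le fun f hf => ?_).trans_lt (ENNReal.inv_lt_top.2 (pos_iff_ne_zero.2 hI_zero))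
  calc pairing Q f = ∫⁻ ω, I⁻¹ * h ω * ENNReal.ofReal (f ω) ∂P :=
        lintegral_withDensity_eq_lintegral_mul₀ (hh.1.const_mul _).aemeasurable
          f.aemeasurable.ennreal_ofReal
    _ = I⁻¹ * ∫⁻ ω, ENNReal.ofReal (f ω) * h ω ∂P := by
        simp_rw [mul_assoc, mul_comm (h _)]
        exact lintegral_const_mul' _ _ (ENNReal.inv_ne_top.2 hI_zero)
    _ ≤ I⁻¹ := mul_le_of_le_one_right' (hh.2 f (mem_insert_of_mem _ hf))

end L0plus

/-- If `C ⊆ L⁰₊` is convex and bounded, then there exists a probability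
measure `Q` equivalent to `P` with `sup_{f ∈ C} E_Q[f] < ∞`. -/
theorem statement10 {Ω : Type*} [MeasurableSpace Ω] (P : Measure Ω) [IsProbabilityMeasure P]
    (C : Set (Ω →ₘ[P] ℝ)) (hCL0 : C ⊆ L0plus P)
    (hconv : Convex ℝ C) (hbdd : Bounded0 P C) :
    ∃ Q : Measure Ω, IsProbabilityMeasure Q ∧ Q ≪ P ∧ P ≪ Q ∧
      (⨆ f ∈ C, pairing Q f) < ⊤ := by
  rcases C.eq_empty_or_nonempty with rfl | hCne
  · exact ⟨P, inferInstance, .rfl, .rfl, by simp⟩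
  obtain ⟨h, hh, hpos⟩ := L0plus.exists_ae_pos_of_tsum_mem (fun _ hh => hh.1)
    ⟨0, L0plus.zero_mem_polar0 _⟩ (fun _ => L0plus.tsum_mem_polar0)
    fun _ hA hPA => L0plus.exists_mem_polar0_measure_inter_ne_zero hCne hCL0 hconv hbdd hA hPA
  exact L0plus.exists_isProbabilityMeasure_equiv_of_mem_polar0 hh hpos
end

section
/- Let Ω = (0,∞) with its Borel σ-field, P a probability measure on Ω equivalent to Lebesgue measure, and ξ the identity random variable ξ(ω) = ω. Let K = {(α, β) ∈ ℝ² : 0 ≤ β ≤ √α ≤ 1} and C = {1 − α + (α + β)ξ : (α, β) ∈ K} ⊆ L0+. Then the set of maximal elements of C is C^max = {1 − α + (α + √α)ξ : α ∈ [0,1]}. -/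
open MeasureTheory Filter Set

noncomputable section

/-- The sample space `Ω = (0, ∞)` with its Borel σ-field. -/
abbrev OmegaInf : Type := Set.Ioi (0:ℝ)

/-- Lebesgue measure on `(0, ∞)`. -/
noncomputable def LebInf : Measure OmegaInf :=
  (volume : Measure ℝ).comap Subtype.val

/-- The identity random variable `ξ(ω) = ω`, as an element of `L⁰`. -/
noncomputable def xi (P : Measure OmegaInf) : OmegaInf →ₘ[P] ℝ :=
  AEEqFun.mk (fun ω => (ω : ℝ)) measurable_subtype_coe.aestronglyMeasurable

/-- `K = {(α, β) ∈ ℝ² : 0 ≤ β ≤ √α ≤ 1}` (with `α ≥ 0`). -/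
def Kset : Set (ℝ × ℝ) :=
  {p | 0 ≤ p.1 ∧ 0 ≤ p.2 ∧ p.2 ≤ Real.sqrt p.1 ∧ Real.sqrt p.1 ≤ 1}

/-- The random variable `1 - α + (α + β) ξ`, as an element of `L⁰`. -/
noncomputable def elt (P : Measure OmegaInf) (a b : ℝ) : OmegaInf →ₘ[P] ℝ :=
  AEEqFun.const OmegaInf (1 - a) + (a + b) • xi P

/-- The set `C = {1 - α + (α + β) ξ : (α, β) ∈ K} ⊆ L⁰₊`. -/
noncomputable def Cex (P : Measure OmegaInf) : Set (OmegaInf →ₘ[P] ℝ) :=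
  {h | ∃ p ∈ Kset, h = elt P p.1 p.2}

/-- The constant random variable `1`, as an element of `L⁰`. -/
noncomputable def oneL (P : Measure OmegaInf) : OmegaInf →ₘ[P] ℝ :=
  AEEqFun.const OmegaInf (1 : ℝ)

end


section Aux

open MeasureTheory Filter Set

lemma exists_good' (P : Measure OmegaInf) (hLP : LebInf ≪ P)
    {p : ℝ → Prop} (h : ∀ᵐ ω : OmegaInf ∂P, p ω)
    (u v : ℝ) (h0 : 0 < u) (huv : u < v) : ∃ x : ℝ, x ∈ Set.Ioo u v ∧ p x := by
  have h' : ∀ᵐ ω : OmegaInf ∂LebInf, p ω := h.filter_mono hLP.ae_le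
  by_contra hcon
  push_neg at hcon
  have hsub : {ω : OmegaInf | (ω:ℝ) ∈ Set.Ioo u v} ⊆ {ω : OmegaInf | ¬ p ω} := by
    intro ω hω
    exact fun hp => hcon ω hω hp
  have h0' : LebInf {ω : OmegaInf | ¬ p ω} = 0 := h'
  have hle := measure_mono (μ := LebInf) hsub
  rw [h0'] at hle
  have : LebInf {ω : OmegaInf | (ω:ℝ) ∈ Set.Ioo u v} = volume (Set.Ioo u v) := by
    rw [LebInf, (MeasurableEmbedding.subtype_coe measurableSet_Ioi).comap_apply]
    congr 1
    ext x
    simp only [Set.mem_image, Set.mem_setOf_eq, Set.mem_Ioo]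
    constructor
    · rintro ⟨⟨y, hy⟩, h, rfl⟩; exact h
    · rintro ⟨h1, h2⟩; exact ⟨⟨x, h0.trans h1⟩, ⟨h1, h2⟩, rfl⟩
  rw [this, Real.volume_Ioo] at hle
  simp only [nonpos_iff_eq_zero, ENNReal.ofReal_eq_zero] at hle
  linarith

lemma affine_le' (P : Measure OmegaInf) (hLP : LebInf ≪ P)
    {c s c' s' : ℝ} (h : ∀ᵐ ω : OmegaInf ∂P, c + s * (ω:ℝ) ≤ c' + s' * (ω:ℝ)) :
    c ≤ c' ∧ s ≤ s' := by
  have hs : s ≤ s' := by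
    by_contra hss
    push_neg at hss
    set M := max 1 ((c' - c) / (s - s')) with hM
    obtain ⟨x, hx, hp⟩ := exists_good' P hLP (p := fun x => c + s * x ≤ c' + s' * x) h M (M + 1)
      (lt_of_lt_of_le one_pos (le_max_left _ _)) (by linarith)
    have h1 : (c' - c) / (s - s') < x := lt_of_le_of_lt (le_max_right _ _) hx.1
    have h2 : c' - c < x * (s - s') := (div_lt_iff₀ (by linarith)).mp h1
    linarith
  refine ⟨?_, hs⟩
  by_contra hc
  push_neg at hc
  rcases eq_or_lt_of_le hs with heq | hlt
  · obtain ⟨x, hx, hp⟩ := exists_good' P hLP (p := fun x => c + s * x ≤ c' + s' * x) h 1 2 one_pos one_lt_two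
    rw [← heq] at hp; linarith
  · set δ := (c - c') / (s' - s) with hδ
    have hδ0 : 0 < δ := div_pos (by linarith) (by linarith)
    obtain ⟨x, hx, hp⟩ := exists_good' P hLP (p := fun x => c + s * x ≤ c' + s' * x) h (δ/2) δ (by linarith) (by linarith)
    have h2 : x * (s' - s) < δ * (s' - s) := mul_lt_mul_of_pos_right hx.2 (by linarith)
    rw [hδ, div_mul_cancel₀ _ (by linarith : s' - s ≠ 0)] at h2
    linarith

lemma elt_coe (P : Measure OmegaInf) (a b : ℝ) :
    (elt P a b : OmegaInf → ℝ) =ᵐ[P] fun ω => (1 - a) + (a + b) * (ω:ℝ) := by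
  have h1 := AEEqFun.coeFn_add (AEEqFun.const OmegaInf (1 - a) : OmegaInf →ₘ[P] ℝ) ((a + b) • xi P)
  have h2 := AEEqFun.coeFn_smul (a + b) (xi P)
  have h3 := AEEqFun.coeFn_const OmegaInf (1 - a) (μ := P)
  have h4 : (xi P : OmegaInf → ℝ) =ᵐ[P] fun ω => (ω:ℝ) :=
    AEEqFun.coeFn_mk _ _
  filter_upwards [h1, h2, h3, h4] with ω e1 e2 e3 e4
  show (elt P a b) ω = _
  rw [elt]
  rw [e1]
  simp only [Pi.add_apply]
  rw [e2, e3]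
  simp only [Pi.smul_apply, smul_eq_mul]
  rw [e4]
  rfl

lemma elt_le_iff (P : Measure OmegaInf) (hLP : LebInf ≪ P) (a b a' b' : ℝ) :
    elt P a b ≤ elt P a' b' ↔ (a' ≤ a ∧ a + b ≤ a' + b') := by
  constructor
  · intro h
    have hle : (elt P a b : OmegaInf → ℝ) ≤ᵐ[P] (elt P a' b' : OmegaInf → ℝ) :=
      AEEqFun.coeFn_le.mpr h
    have hae : ∀ᵐ ω : OmegaInf ∂P,
        (1 - a) + (a + b) * (ω:ℝ) ≤ (1 - a') + (a' + b') * (ω:ℝ) := by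
      filter_upwards [hle, elt_coe P a b, elt_coe P a' b'] with ω h1 h2 h3
      rw [← h2, ← h3]; exact h1
    obtain ⟨hc, hs⟩ := affine_le' P hLP hae
    exact ⟨by linarith, hs⟩
  · rintro ⟨h1, h2⟩
    refine AEEqFun.coeFn_le.mp ?_
    filter_upwards [elt_coe P a b, elt_coe P a' b'] with ω e1 e2
    rw [e1, e2]
    have hω : (0:ℝ) < (ω:ℝ) := ω.2
    nlinarith

lemma elt_eq_iff (P : Measure OmegaInf) (hLP : LebInf ≪ P) (a b a' b' : ℝ) :
    elt P a b = elt P a' b' ↔ (a = a' ∧ a + b = a' + b') := by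
  constructor
  · intro h
    obtain ⟨h1, h2⟩ := (elt_le_iff P hLP a b a' b').mp h.le
    obtain ⟨h3, h4⟩ := (elt_le_iff P hLP a' b' a b).mp h.ge
    exact ⟨le_antisymm h3 h1, le_antisymm h2 h4⟩
  · rintro ⟨rfl, h2⟩
    have : b = b' := by linarith
    rw [this]

end Aux

/-- For `Ω = (0, ∞)`, `P` a probability equivalent to Lebesgue measure,
and `C = {1 - α + (α + β) ξ : (α, β) ∈ K}`, the set of maximal elements of `C` is
`C^max = {1 - α + (α + √α) ξ : α ∈ [0, 1]}`. -/
theorem statement14 (P : Measure OmegaInf) [IsProbabilityMeasure P]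
    (hPL : P ≪ LebInf) (hLP : LebInf ≪ P) :
    maxSet P (Cex P) = {h | ∃ a ∈ Set.Icc (0:ℝ) 1, h = elt P a (Real.sqrt a)} := by
  ext h
  simp only [maxSet, Cex, Set.mem_setOf_eq]
  constructor
  · rintro ⟨⟨p, ⟨ha0, hb0, hbs, hs1⟩, rfl⟩, hmax⟩
    have hmem : elt P p.1 (Real.sqrt p.1) ∈ Cex P :=
      ⟨(p.1, Real.sqrt p.1), ⟨ha0, Real.sqrt_nonneg _, le_refl _, hs1⟩, rfl⟩
    have hsub : elt P p.1 p.2 ≤ elt P p.1 (Real.sqrt p.1) :=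
      (elt_le_iff P hLP _ _ _ _).mpr ⟨le_refl _, by linarith⟩
    have heq := hmax _ hmem hsub
    have ha1 : p.1 ≤ 1 := by nlinarith [Real.sq_sqrt ha0, Real.sqrt_nonneg p.1]
    exact ⟨p.1, ⟨ha0, ha1⟩, heq⟩
  · rintro ⟨a, ⟨ha0, ha1⟩, rfl⟩
    refine ⟨⟨(a, Real.sqrt a), ⟨ha0, Real.sqrt_nonneg a, le_refl _, Real.sqrt_le_one.mpr ha1⟩, rfl⟩, ?_⟩
    rintro g ⟨⟨a', b'⟩, ⟨ha'0, hb'0, hb's, hs'1⟩, rfl⟩ hle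
    obtain ⟨h1, h2⟩ := (elt_le_iff P hLP _ _ _ _).mp hle
    have hsq : Real.sqrt a' ≤ Real.sqrt a := Real.sqrt_le_sqrt h1
    have haa : a = a' := by linarith
    exact (elt_eq_iff P hLP _ _ _ _).mpr ⟨haa, by linarith⟩
end

section
/- Let Ω = (0,∞) with its Borel σ-field, P a probability measure on Ω equivalent to Lebesgue measure, and ξ the identity random variable ξ(ω) = ω. Let K = {(α, β) ∈ ℝ² : 0 ≤ β ≤ √α ≤ 1} and C = {1 − α + (α + β)ξ : (α, β) ∈ K} ⊆ L0+. Then the constant random variable 1 is a maximal element of C but is not an outer support point of C: there exists no σ-finite nonnegative measure μ ≪ P with 0 < sup_{f ∈ C} ∫ f dμ = ∫ 1 dμ < ∞. In particular, the inclusion C^osp ⊆ C^max is strict for this convex and compact set C. -/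
open MeasureTheory Filter Set

open ENNReal

lemma pairing_eq_lintegral_of_ae_eq {Ω : Type*} [MeasurableSpace Ω]
    {P μ : Measure Ω} (hμP : μ ≪ P) {f : Ω →ₘ[P] ℝ} {g : Ω → ℝ} (hfg : f =ᵐ[P] g) :
    pairing μ f = ∫⁻ ω, ENNReal.ofReal (g ω) ∂μ :=
  lintegral_congr_ae <| (hfg.filter_mono hμP.ae_le).mono fun _ h => congrArg ENNReal.ofReal h

lemma Kset.fst_le_one {p : ℝ × ℝ} (hp : p ∈ Kset) : p.1 ≤ 1 := by
  have := Real.sq_sqrt hp.1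
  nlinarith [hp.2.2.2, Real.sqrt_nonneg p.1]

lemma Kset.sq_mem {t : ℝ} (ht₀ : 0 ≤ t) (ht₁ : t ≤ 1) : (t ^ 2, t) ∈ Kset := by
  have hsq : Real.sqrt (t ^ 2) = t := Real.sqrt_sq ht₀
  exact ⟨sq_nonneg t, ht₀, hsq.ge, hsq.trans_le ht₁⟩

/-- On the boundary arc `α = β²` of `K`, `α` is only quadratic in `β`, so `(1 - α) m + (α + β) i`
has slope `i > 0` at `β = 0` and exceeds its value `m` at the origin. -/
lemma Kset.exists_lt (m : ℝ) {i : ℝ} (hm : 0 ≤ m) (hi : 0 < i) :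
    ∃ p ∈ Kset, m < (1 - p.1) * m + (p.1 + p.2) * i := by
  set t := i / (m + i)
  have ht₀ : 0 < t := by positivity
  have ht₁ : t ≤ 1 := div_le_one_of_le₀ (by linarith) (by positivity)
  have hteq : t * (m + i) = i := div_mul_cancel₀ i (by positivity)
  refine ⟨(t ^ 2, t), Kset.sq_mem ht₀.le ht₁, ?_⟩
  nlinarith [mul_pos (mul_pos ht₀ ht₀) hi]

section

variable {P : Measure OmegaInf}

lemma coeFn_oneL : (oneL P : OmegaInf → ℝ) =ᵐ[P] fun _ => 1 :=
  AEEqFun.coeFn_const _ _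

lemma coeFn_xi : (xi P : OmegaInf → ℝ) =ᵐ[P] fun ω => (ω : ℝ) :=
  AEEqFun.coeFn_mk _ _

lemma coeFn_elt (a b : ℝ) :
    (elt P a b : OmegaInf → ℝ) =ᵐ[P] fun ω => 1 - a + (a + b) * (ω : ℝ) := by
  filter_upwards [AEEqFun.coeFn_add (AEEqFun.const OmegaInf (1 - a)) ((a + b) • xi P),
    AEEqFun.coeFn_smul (a + b) (xi P), AEEqFun.coeFn_const OmegaInf (1 - a),
    coeFn_xi] with ω h_add h_smul h_const h_xi
  simp only [elt, h_add, Pi.add_apply, h_smul, Pi.smul_apply, h_const, h_xi,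
    Function.const_apply, smul_eq_mul]

lemma elt_zero_zero : elt P 0 0 = oneL P := by
  simp [elt, oneL]

lemma elt_mem_Cex {p : ℝ × ℝ} (hp : p ∈ Kset) : elt P p.1 p.2 ∈ Cex P :=
  ⟨p, hp, rfl⟩

lemma oneL_mem_Cex : oneL P ∈ Cex P :=
  elt_zero_zero ▸ elt_mem_Cex (p := (0, 0)) (by simp [Kset])

lemma oneL_ne_zero [NeZero P] : oneL P ≠ 0 := by
  intro h
  have h10 : ∀ᵐ _ ∂P, (1 : ℝ) = 0 := by
    filter_upwards [coeFn_oneL (P := P), h ▸ AEEqFun.coeFn_zero (μ := P)] with ω h1 h0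
    rw [← h1, h0, Pi.zero_apply]
  obtain ⟨_, h10⟩ := h10.exists
  exact one_ne_zero h10

lemma LebInf_setOf_lt (c : ℝ) : LebInf {ω : OmegaInf | (ω : ℝ) < c} = ENNReal.ofReal c := by
  have himg : Subtype.val '' {ω : OmegaInf | (ω : ℝ) < c} = Ioo 0 c := by
    ext x
    exact ⟨fun ⟨y, hy, hyx⟩ => hyx ▸ ⟨y.2, hy⟩, fun hx => ⟨⟨x, hx.1⟩, hx.2, rfl⟩⟩
  rw [LebInf, (MeasurableEmbedding.subtype_coe measurableSet_Ioi).comap_apply, himg,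
    Real.volume_Ioo, sub_zero]

lemma frequently_lt_of_LebInf_ac (hLP : LebInf ≪ P) {c : ℝ} (hc : 0 < c) :
    ∃ᵐ ω : OmegaInf ∂P, (ω : ℝ) < c := by
  refine frequently_ae_iff.2 fun h0 => ?_
  have := hLP h0
  rw [LebInf_setOf_lt, ENNReal.ofReal_eq_zero] at this
  linarith

lemma eq_zero_of_oneL_le_elt (hLP : LebInf ≪ P) {p : ℝ × ℝ} (hp : p ∈ Kset)
    (hle : oneL P ≤ elt P p.1 p.2) : p = 0 := by
  obtain ⟨a, b⟩ := p
  obtain ⟨ha, hb, hba, -⟩ := hp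
  have hdom : ∀ᵐ ω : OmegaInf ∂P, a ≤ (a + b) * (ω : ℝ) := by
    filter_upwards [AEEqFun.coeFn_le.2 hle, coeFn_oneL, coeFn_elt a b] with ω h h1 helt
    rw [h1, helt] at h
    linarith
  have ha0 : a = 0 := by
    by_contra hne
    have hapos : 0 < a := lt_of_le_of_ne ha (Ne.symm hne)
    have hab : 0 < a + b := by positivity
    obtain ⟨ω, hω, hlt⟩ :=
      (hdom.and_frequently (frequently_lt_of_LebInf_ac hLP (div_pos hapos hab))).exists
    rw [lt_div_iff₀ hab] at hlt
    linarith
  subst ha0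
  have : b = 0 := le_antisymm (by simpa using hba) hb
  simp [this]

lemma oneL_mem_maxSet (hLP : LebInf ≪ P) : oneL P ∈ maxSet P (Cex P) := by
  refine ⟨oneL_mem_Cex, ?_⟩
  rintro g ⟨p, hp, rfl⟩ hle
  rw [eq_zero_of_oneL_le_elt hLP hp hle]
  exact elt_zero_zero.symm

variable {μ : Measure OmegaInf}

lemma pairing_oneL (hμP : μ ≪ P) : pairing μ (oneL P) = μ univ := by
  simp [pairing_eq_lintegral_of_ae_eq hμP coeFn_oneL]

lemma pairing_elt (hμP : μ ≪ P) {p : ℝ × ℝ} (hp : p ∈ Kset) :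
    pairing μ (elt P p.1 p.2) = ENNReal.ofReal (1 - p.1) * μ univ +
      ENNReal.ofReal (p.1 + p.2) * ∫⁻ ω, ENNReal.ofReal (ω : ℝ) ∂μ := by
  have h₁ : 0 ≤ 1 - p.1 := sub_nonneg.2 (Kset.fst_le_one hp)
  have h₂ : 0 ≤ p.1 + p.2 := add_nonneg hp.1 hp.2.1
  rw [pairing_eq_lintegral_of_ae_eq hμP (coeFn_elt p.1 p.2), ← lintegral_const_mul _
    measurable_subtype_coe.ennreal_ofReal, ← lintegral_const, ← lintegral_add_left
    measurable_const]
  refine lintegral_congr fun ω => ?_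
  rw [ENNReal.ofReal_add h₁ (mul_nonneg h₂ ω.2.le), ENNReal.ofReal_mul h₂]

lemma lintegral_coe_pos (hμ : μ ≠ 0) : 0 < ∫⁻ ω, ENNReal.ofReal (ω : ℝ) ∂μ := by
  rw [lintegral_pos_iff_support measurable_subtype_coe.ennreal_ofReal, Function.support_eq_univ
    fun ω => (ENNReal.ofReal_pos.2 ω.2).ne']
  exact Measure.measure_univ_pos.2 hμ

lemma not_exists_support_oneL :
    ¬ ∃ μ : Measure OmegaInf, μ ≪ P ∧ SigmaFinite μ ∧
        0 < pairing μ (oneL P) ∧ pairing μ (oneL P) < ⊤ ∧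
        (⨆ f ∈ Cex P, pairing μ f) = pairing μ (oneL P) := by
  rintro ⟨μ, hμP, -, hpos, hfin, hsup⟩
  rw [pairing_oneL hμP] at hpos hfin hsup
  set I := ∫⁻ ω, ENNReal.ofReal (ω : ℝ) ∂μ
  have hle : ∀ p ∈ Kset, ENNReal.ofReal (1 - p.1) * μ univ + ENNReal.ofReal (p.1 + p.2) * I
      ≤ μ univ := fun p hp =>
    pairing_elt hμP hp ▸ hsup ▸ le_iSup₂_of_le (elt P p.1 p.2) (elt_mem_Cex hp) le_rfl
  have hI : I ≠ ⊤ := by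
    intro hI
    have := hle (1, 1) (by simp [Kset])
    rw [hI, ENNReal.mul_top (by norm_num)] at this
    exact hfin.ne (top_le_iff.1 (le_add_self.trans this))
  obtain ⟨p, hp, hlt⟩ := Kset.exists_lt (μ univ).toReal toReal_nonneg
    (ENNReal.toReal_pos (lintegral_coe_pos (Measure.measure_univ_pos.1 hpos)).ne' hI)
  have h₁ : 0 ≤ 1 - p.1 := sub_nonneg.2 (Kset.fst_le_one hp)
  have h₂ : 0 ≤ p.1 + p.2 := add_nonneg hp.1 hp.2.1
  have h := hle p hp
  rw [← ofReal_toReal hfin.ne, ← ofReal_toReal hI, ← ofReal_mul h₁, ← ofReal_mul h₂,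
    ← ofReal_add (mul_nonneg h₁ toReal_nonneg) (mul_nonneg h₂ toReal_nonneg),
    ofReal_le_ofReal_iff toReal_nonneg] at h
  linarith

end

theorem statement15_general (P : Measure OmegaInf) [IsProbabilityMeasure P]
    (hLP : LebInf ≪ P) :
    oneL P ∈ maxSet P (Cex P) ∧
    (¬ ∃ μ : Measure OmegaInf, μ ≪ P ∧ SigmaFinite μ ∧
        0 < pairing μ (oneL P) ∧ pairing μ (oneL P) < ⊤ ∧
        (⨆ f ∈ Cex P, pairing μ f) = pairing μ (oneL P)) ∧
    oneL P ∉ osp P (Cex P) ∧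
    osp P (Cex P) ⊆ maxSet P (Cex P) ∧ osp P (Cex P) ≠ maxSet P (Cex P) := by
  have hnotin : oneL P ∉ osp P (Cex P) := by
    rintro ⟨-, hC | hsupp⟩
    · exact oneL_ne_zero (hC ▸ oneL_mem_Cex : oneL P ∈ ({0} : Set _))
    · exact not_exists_support_oneL hsupp
  exact ⟨oneL_mem_maxSet hLP, not_exists_support_oneL, hnotin, fun _ hg => hg.1,
    fun h => hnotin (h ▸ oneL_mem_maxSet hLP)⟩

/-- For `Ω = (0, ∞)`, `P` a probability equivalent to Lebesgue measure,
and `C = {1 - α + (α + β) ξ : (α, β) ∈ K}`, the constant random variable `1` is a maximal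
element of `C` but is not an outer support point of `C`: there is no σ-finite nonnegative
measure `μ ≪ P` with `0 < sup_{f ∈ C} ∫ f dμ = ∫ 1 dμ < ∞`. In particular, the inclusion
`C^osp ⊆ C^max` is strict for this convex and compact set `C`. -/
theorem statement15 (P : Measure OmegaInf) [IsProbabilityMeasure P]
    (hPL : P ≪ LebInf) (hLP : LebInf ≪ P) :
    oneL P ∈ maxSet P (Cex P) ∧
    (¬ ∃ μ : Measure OmegaInf, μ ≪ P ∧ SigmaFinite μ ∧
        0 < pairing μ (oneL P) ∧ pairing μ (oneL P) < ⊤ ∧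
        (⨆ f ∈ Cex P, pairing μ f) = pairing μ (oneL P)) ∧
    oneL P ∉ osp P (Cex P) ∧
    osp P (Cex P) ⊆ maxSet P (Cex P) ∧ osp P (Cex P) ≠ maxSet P (Cex P) :=
  statement15_general P hLP
end
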